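/- arXiv:1508.00136 — 8 statements merged into one kernel-verified Lean document; each statement's English description precedes it below -/
import Mathlib

section
/- For every real number β with 0 < β ≤ 1 there exists a constant c_β > 0 such that the following holds for every dimension d ≥ 1 and every real number α with 0 < α < 1: every [-1,-β] ∪ {α}-spherical code in R^d has at most c_β · d elements. -/
open scoped RealInnerProductSpace

open Finset Set Module

/-!
Take a maximal subset `S` of the code with all inner products `≤ -β`. Since `‖∑ S‖² ≥ 0`,
`|S| ≤ 1 + 1/β`, and by maximality every other vector has inner product `α` with some `s ∈ S`.
Projecting the vectors at inner product `α` with `s` onto `sᗮ` and normalizing gives a code of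
the same kind with `α` replaced by `α/(1+α)`, i.e. with `1/α` raised by one; each such step
multiplies the bound by at most `1 + 1/β`. After `⌈2/β²⌉` steps `α ≤ β²/2`. Then take instead a
maximal subset `I` with all inner products `α`: its Gram matrix `(1-α)·1 + α·J` is nonsingular, so
`|I| ≤ d`, and for `t ∈ I` the vectors at inner product `≤ -β` with `t` number at most `2/β²`, as
their sum has inner product `≤ -β·m` with `t` but squared norm at most `m + α m²`.
-/

lemma Finset.exists_maximal_pairwise_subset {ι : Type*} (P : Finset ι)
    {r : ι → ι → Prop} (hr : ∀ x y, r x y → r y x) :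
    ∃ S ⊆ P, (S : Set ι).Pairwise r ∧ ∀ v ∈ P, v ∉ S → ∃ s ∈ S, v ≠ s ∧ ¬ r v s := by
  classical
  obtain ⟨S, hSmem, hSmax⟩ :=
    (P.powerset.filter fun T : Finset ι => (T : Set ι).Pairwise r).exists_maximal
      ⟨∅, by simp⟩
  obtain ⟨hSP, hS⟩ : S ⊆ P ∧ (S : Set ι).Pairwise r := by simpa using hSmem
  refine ⟨S, hSP, hS, fun v hv hvS => ?_⟩
  by_contra! hall
  have hins : insert v S ∈ P.powerset.filter fun T : Finset ι => (T : Set ι).Pairwise r := by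
    simpa [Set.pairwise_insert, insert_subset_iff, hv, hSP, hS] using
      fun s hs hvs => ⟨hall s hs hvs, hr v s (hall s hs hvs)⟩
  exact hvS (hSmax hins (subset_insert v S) (mem_insert_self v S))

lemma Finset.card_le_card_mul_one_add {ι : Type*} {P S : Finset ι}
    {N : ι → Finset ι} {b : ℝ} (hcover : ∀ v ∈ P, v ∉ S → ∃ s ∈ S, v ∈ N s)
    (hN : ∀ s ∈ S, ((N s).card : ℝ) ≤ b) :
    (P.card : ℝ) ≤ S.card * (1 + b) := by
  classical
  have hsub : P ⊆ S ∪ S.biUnion N := fun v hv => by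
    by_cases hvS : v ∈ S
    · exact mem_union_left _ hvS
    · obtain ⟨s, hs, hvs⟩ := hcover v hv hvS
      exact mem_union_right _ (mem_biUnion.2 ⟨s, hs, hvs⟩)
  have hcard : P.card ≤ S.card + ∑ s ∈ S, (N s).card :=
    (card_le_card hsub).trans ((card_union_le _ _).trans (Nat.add_le_add_left card_biUnion_le _))
  calc (P.card : ℝ) ≤ S.card + ∑ s ∈ S, ((N s).card : ℝ) := by exact_mod_cast hcard
    _ ≤ S.card + S.card * b := by
      have := sum_le_card_nsmul S (fun s => ((N s).card : ℝ)) b hN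
      rw [nsmul_eq_mul] at this
      linarith
    _ = S.card * (1 + b) := by ring

section SphericalCode

variable {F : Type*} [NormedAddCommGroup F] [InnerProductSpace ℝ F]

noncomputable def linkMap (s : F) (α : ℝ) (v : F) : F := (√(1 - α ^ 2))⁻¹ • (v - α • s)

lemma inner_linkMap {s v w : F} {α : ℝ} (hs : ‖s‖ = 1) (hα : α ^ 2 < 1) (hv : ⟪v, s⟫ = α)
    (hw : ⟪w, s⟫ = α) :
    ⟪linkMap s α v, linkMap s α w⟫ = (⟪v, w⟫ - α ^ 2) / (1 - α ^ 2) := by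
  have hss : ⟪s, s⟫ = 1 := by rw [real_inner_self_eq_norm_sq, hs, one_pow]
  have hsw : ⟪s, w⟫ = α := by rw [real_inner_comm, hw]
  have hsqrt : (√(1 - α ^ 2))⁻¹ * (√(1 - α ^ 2))⁻¹ = (1 - α ^ 2)⁻¹ := by
    rw [← mul_inv, Real.mul_self_sqrt (by linarith)]
  simp only [linkMap, real_inner_smul_left, real_inner_smul_right, inner_sub_left,
    inner_sub_right, hv, hsw, hss]
  calc _ = ((√(1 - α ^ 2))⁻¹ * (√(1 - α ^ 2))⁻¹) * (⟪v, w⟫ - α ^ 2) := by ring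
    _ = _ := by rw [hsqrt, inv_mul_eq_div]

lemma linkMap_injective (s : F) {α : ℝ} (hα : α ^ 2 < 1) : Function.Injective (linkMap s α) :=
  (smul_right_injective F (inv_ne_zero (Real.sqrt_pos.2 (sub_pos.2 hα)).ne')).comp
    sub_left_injective

structure IsSphericalCode (L : Set ℝ) (P : Finset F) : Prop where
  norm_eq_one : ∀ v ∈ P, ‖v‖ = 1
  pairwise : (P : Set F).Pairwise fun v w => ⟪v, w⟫ ∈ L

namespace IsSphericalCode

variable {L L' : Set ℝ} {P Q : Finset F}

lemma mono (hL : L ⊆ L') (hP : IsSphericalCode L P) : IsSphericalCode L' P :=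
  ⟨hP.norm_eq_one, hP.pairwise.mono' fun _ _ h => hL h⟩

lemma subset (hQP : Q ⊆ P) (hP : IsSphericalCode L P) : IsSphericalCode L Q :=
  ⟨fun v hv => hP.norm_eq_one v (hQP hv), hP.pairwise.mono (by exact_mod_cast hQP)⟩

lemma inner_self (hP : IsSphericalCode L P) {v : F} (hv : v ∈ P) : ⟪v, v⟫ = 1 := by
  rw [real_inner_self_eq_norm_sq, hP.norm_eq_one v hv, one_pow]

lemma norm_sum_sq_le {a : ℝ} (hP : IsSphericalCode (Iic a) P) :
    ‖∑ v ∈ P, v‖ ^ 2 ≤ P.card + a * P.card * (P.card - 1) := by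
  classical
  have hrow : ∀ v ∈ P, ⟪v, ∑ w ∈ P, w⟫ ≤ 1 + a * (P.card - 1) := fun v hv => by
    rw [inner_sum, ← add_sum_erase _ _ hv, hP.inner_self hv, ← cast_card_erase_of_mem hv]
    have := sum_le_card_nsmul (P.erase v) (fun w => ⟪v, w⟫) a fun w hw =>
      hP.pairwise hv (mem_of_mem_erase hw) (ne_of_mem_erase hw).symm
    rw [nsmul_eq_mul] at this
    linarith
  calc ‖∑ v ∈ P, v‖ ^ 2 = ∑ v ∈ P, ⟪v, ∑ w ∈ P, w⟫ := by
        rw [← real_inner_self_eq_norm_sq, sum_inner]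
    _ ≤ ∑ _v ∈ P, (1 + a * (P.card - 1)) := sum_le_sum hrow
    _ = P.card + a * P.card * (P.card - 1) := by rw [sum_const, nsmul_eq_mul]; ring

lemma card_le_one_add_inv {β : ℝ} (hβ : 0 < β) (hP : IsSphericalCode (Iic (-β)) P) :
    (P.card : ℝ) ≤ 1 + 1 / β := by
  rcases P.eq_empty_or_nonempty with rfl | hne
  · simp only [Finset.card_empty, CharP.cast_eq_zero]; positivity
  have hn : (0 : ℝ) < P.card := by exact_mod_cast hne.card_pos
  have hgram : 0 ≤ P.card * (1 - β * (P.card - 1)) := by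
    nlinarith [hP.norm_sum_sq_le, sq_nonneg ‖∑ v ∈ P, v‖]
  have key : β * (P.card - 1) ≤ 1 := by nlinarith [nonneg_of_mul_nonneg_right hgram hn]
  rw [← sub_nonneg, show 1 + 1 / β - P.card = (1 - β * (P.card - 1)) / β by field_simp; ring]
  exact div_nonneg (by linarith) hβ.le

lemma sq_sub_mul_card_le_one {a β : ℝ} (ha : 0 ≤ a) (hβ : 0 ≤ β)
    (hP : IsSphericalCode (Iic a) P) {t : F} (ht : ‖t‖ = 1) (htP : ∀ v ∈ P, ⟪t, v⟫ ≤ -β) :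
    (β ^ 2 - a) * P.card ≤ 1 := by
  rcases P.eq_empty_or_nonempty with rfl | hne
  · simp
  have hn : (0 : ℝ) < P.card := by exact_mod_cast hne.card_pos
  have hsum : β * P.card ≤ ‖∑ v ∈ P, v‖ := by
    have hinner : ⟪t, ∑ v ∈ P, v⟫ ≤ P.card * -β := by
      rw [inner_sum, ← nsmul_eq_mul]
      exact sum_le_card_nsmul _ _ _ htP
    have hcs := abs_real_inner_le_norm t (∑ v ∈ P, v)
    rw [ht, one_mul] at hcs
    linarith [neg_abs_le ⟪t, ∑ v ∈ P, v⟫]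
  have hsq : (β * P.card) ^ 2 ≤ P.card + a * P.card * (P.card - 1) :=
    (pow_le_pow_left₀ (by positivity) hsum 2).trans hP.norm_sum_sq_le
  nlinarith

lemma card_le_finrank [FiniteDimensional ℝ F] {α : ℝ} (hα0 : 0 ≤ α) (hα1 : α < 1)
    (hP : IsSphericalCode {α} P) : P.card ≤ finrank ℝ F := by
  classical
  suffices LinearIndepOn ℝ id (P : Set F) from this.finset_card_le_finrank
  rw [linearIndepOn_finset_iff]
  intro f hf
  have hrow : ∀ y ∈ P, (1 - α) * f y + α * ∑ x ∈ P, f x = 0 := fun y hy => by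
    have hterm : ∀ x ∈ P, f x * ⟪x, y⟫ = α * f x + if x = y then (1 - α) * f x else 0 :=
      fun x hx => by
        split_ifs with hxy
        · rw [hxy, hP.inner_self hy]; ring
        · rw [show ⟪x, y⟫ = α from hP.pairwise hx hy hxy]; ring
    have h0 : ⟪∑ x ∈ P, f x • id x, y⟫ = 0 := by rw [hf, inner_zero_left]
    simp only [sum_inner, id, real_inner_smul_left] at h0
    rw [sum_congr rfl hterm, sum_add_distrib, sum_ite_eq', if_pos hy, ← mul_sum] at h0
    linarith
  have htotal : (1 - α + α * P.card) * ∑ x ∈ P, f x = 0 := by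
    have := sum_congr rfl hrow
    rw [sum_add_distrib, ← mul_sum, sum_const, nsmul_eq_mul, sum_const_zero] at this
    linarith
  have hpos : 0 < 1 - α + α * P.card := by nlinarith [(Nat.cast_nonneg P.card : (0 : ℝ) ≤ _)]
  have hT : ∑ x ∈ P, f x = 0 := (mul_eq_zero.1 htotal).resolve_left hpos.ne'
  intro y hy
  have := hrow y hy
  rw [hT, mul_zero, add_zero] at this
  exact (mul_eq_zero.1 this).resolve_left (by linarith)

lemma image_linkMap [DecidableEq F] {s : F} {α : ℝ} (hP : IsSphericalCode L P) (hs : ‖s‖ = 1)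
    (hα : α ^ 2 < 1) (hPs : ∀ v ∈ P, ⟪v, s⟫ = α) :
    IsSphericalCode ((fun t => (t - α ^ 2) / (1 - α ^ 2)) '' L) (P.image (linkMap s α)) := by
  have hinner : ∀ v ∈ P, ∀ w ∈ P,
      ⟪linkMap s α v, linkMap s α w⟫ = (⟪v, w⟫ - α ^ 2) / (1 - α ^ 2) :=
    fun v hv w hw => inner_linkMap hs hα (hPs v hv) (hPs w hw)
  refine ⟨fun u hu => ?_, ?_⟩
  · obtain ⟨v, hv, rfl⟩ := mem_image.1 hu
    have h1 : ‖linkMap s α v‖ ^ 2 = 1 := by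
      rw [← real_inner_self_eq_norm_sq, hinner v hv v hv, hP.inner_self hv,
        div_self (by linarith)]
    exact (pow_eq_one_iff_of_nonneg (norm_nonneg _) two_ne_zero).1 h1
  · rw [coe_image, ((linkMap_injective s hα).injOn).pairwise_image]
    intro v hv w hw hvw
    exact ⟨_, hP.pairwise hv hw hvw, (hinner v hv w hw).symm⟩

lemma card_le_of_le_sq_div_two [FiniteDimensional ℝ F] {α β : ℝ} (hβ : 0 < β) (hα0 : 0 < α)
    (hα1 : α < 1) (hαβ : α ≤ β ^ 2 / 2) (hP : IsSphericalCode (Iic (-β) ∪ {α}) P) :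
    (P.card : ℝ) ≤ finrank ℝ F * (1 + 2 / β ^ 2) := by
  classical
  obtain ⟨I, hIP, hI, hdom⟩ := P.exists_maximal_pairwise_subset (r := fun v w => ⟪v, w⟫ = α)
    fun v w h => (real_inner_comm v w).trans h
  have hIcard : (I.card : ℝ) ≤ finrank ℝ F := by
    exact_mod_cast card_le_finrank hα0.le hα1 ⟨fun v hv => hP.norm_eq_one v (hIP hv), hI⟩
  have hcover : ∀ v ∈ P, v ∉ I → ∃ t ∈ I, v ∈ P.filter fun u => ⟪t, u⟫ ≤ -β :=
    fun v hv hvI => by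
      obtain ⟨t, ht, hvt, hne⟩ := hdom v hv hvI
      refine ⟨t, ht, mem_filter.2 ⟨hv, ?_⟩⟩
      rw [real_inner_comm]
      exact (hP.pairwise hv (hIP ht) hvt).resolve_right hne
  have hN : ∀ t ∈ I, ((P.filter fun u => ⟪t, u⟫ ≤ -β).card : ℝ) ≤ 2 / β ^ 2 := fun t ht => by
    have hcode : IsSphericalCode (Iic α) (P.filter fun u => ⟪t, u⟫ ≤ -β) :=
      (hP.subset (filter_subset _ _)).mono <| union_subset (Iic_subset_Iic.2 (by linarith))
        (singleton_subset_iff.2 (Set.mem_Iic.2 le_rfl))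
    have := hcode.sq_sub_mul_card_le_one hα0.le hβ.le (hP.norm_eq_one t (hIP ht))
      fun v hv => (mem_filter.1 hv).2
    rw [le_div_iff₀ (by positivity)]
    nlinarith
  calc (P.card : ℝ) ≤ I.card * (1 + 2 / β ^ 2) := card_le_card_mul_one_add hcover hN
    _ ≤ finrank ℝ F * (1 + 2 / β ^ 2) := by gcongr

lemma card_le_of_link {α β B : ℝ} (hβ : 0 < β) (hα0 : 0 < α) (hα1 : α < 1)
    (hlink : ∀ Q : Finset F, IsSphericalCode (Iic (-β) ∪ {α / (1 + α)}) Q → (Q.card : ℝ) ≤ B)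
    (hP : IsSphericalCode (Iic (-β) ∪ {α}) P) :
    (P.card : ℝ) ≤ (1 + 1 / β) * (1 + B) := by
  classical
  obtain ⟨S, hSP, hS, hdom⟩ := P.exists_maximal_pairwise_subset (r := fun v w => ⟪v, w⟫ ≤ -β)
    fun v w h => (real_inner_comm v w).trans_le h
  have hScard : (S.card : ℝ) ≤ 1 + 1 / β :=
    card_le_one_add_inv hβ ⟨fun v hv => hP.norm_eq_one v (hSP hv), hS⟩
  have hcover : ∀ v ∈ P, v ∉ S → ∃ s ∈ S, v ∈ P.filter fun u => ⟪u, s⟫ = α :=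
    fun v hv hvS => by
      obtain ⟨s, hs, hvs, hne⟩ := hdom v hv hvS
      exact ⟨s, hs, mem_filter.2 ⟨hv, (hP.pairwise hv (hSP hs) hvs).resolve_left hne⟩⟩
  have hα2 : α ^ 2 < 1 := by nlinarith
  have hlinkL : (fun t => (t - α ^ 2) / (1 - α ^ 2)) '' (Iic (-β) ∪ {α}) ⊆
      Iic (-β) ∪ {α / (1 + α)} := by
    rintro _ ⟨t, ht | ht, rfl⟩
    · refine Or.inl (show (t - α ^ 2) / (1 - α ^ 2) ≤ -β from ?_)
      rw [div_le_iff₀ (by linarith)]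
      nlinarith [show t ≤ -β from ht]
    · refine Or.inr (show (t - α ^ 2) / (1 - α ^ 2) = α / (1 + α) from ?_)
      rw [show t = α from ht, div_eq_div_iff (by linarith) (by linarith)]
      ring
  have hN : ∀ s ∈ S, ((P.filter fun u => ⟪u, s⟫ = α).card : ℝ) ≤ B := fun s hs => by
    rw [← Finset.card_image_of_injective _ (linkMap_injective s hα2)]
    exact hlink _ (((hP.subset (filter_subset _ _)).image_linkMap (hP.norm_eq_one s (hSP hs))
      hα2 fun v hv => (mem_filter.1 hv).2).mono hlinkL)
  have hB : 0 ≤ B := by simpa using hlink ∅ ⟨by simp, by simp⟩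
  calc (P.card : ℝ) ≤ S.card * (1 + B) := card_le_card_mul_one_add hcover hN
    _ ≤ (1 + 1 / β) * (1 + B) := by gcongr

lemma card_le_of_two_div_sq_le [FiniteDimensional ℝ F] {β : ℝ} (hβ : 0 < β) (k : ℕ) {α : ℝ}
    (hα0 : 0 < α) (hα1 : α < 1) (hk : 2 / β ^ 2 ≤ 1 / α + k)
    (hP : IsSphericalCode (Iic (-β) ∪ {α}) P) :
    (P.card : ℝ) ≤ (1 + 1 / β) ^ k * (k + finrank ℝ F * (1 + 2 / β ^ 2)) := by
  induction k generalizing α P with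
  | zero =>
    have hαβ : α ≤ β ^ 2 / 2 := by
      rw [CharP.cast_eq_zero, add_zero, div_le_div_iff₀ (by positivity) hα0] at hk
      linarith
    simpa using card_le_of_le_sq_div_two hβ hα0 hα1 hαβ hP
  | succ k ih =>
    have hinv : 1 / (α / (1 + α)) = 1 / α + 1 := by field_simp
    have hstep := card_le_of_link hβ hα0 hα1 (fun Q hQ => ih (α := α / (1 + α)) (by positivity)
      ((div_lt_one (by linarith)).2 (by linarith)) (by push_cast at hk; linarith) hQ) hP
    have hm : 1 + 1 / β ≤ (1 + 1 / β) ^ (k + 1) :=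
      le_self_pow₀ (le_add_of_nonneg_right (by positivity)) k.succ_ne_zero
    rw [pow_succ] at hm ⊢
    push_cast
    nlinarith

end IsSphericalCode

end SphericalCode

theorem spherical_code_linear_bound_general (β : ℝ) (hβ0 : 0 < β) :
    ∃ c : ℝ, 0 < c ∧ ∀ d : ℕ, 1 ≤ d → ∀ α : ℝ, 0 < α → α < 1 →
      ∀ P : Finset (EuclideanSpace ℝ (Fin d)),
        (∀ v ∈ P, ‖v‖ = 1) →
        (∀ v ∈ P, ∀ w ∈ P, v ≠ w → ⟪v, w⟫ ∈ Set.Icc (-1 : ℝ) (-β) ∪ {α}) →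
        (P.card : ℝ) ≤ c * d := by
  set k := ⌈2 / β ^ 2⌉₊
  refine ⟨(1 + 1 / β) ^ k * (k + (1 + 2 / β ^ 2)), by positivity,
    fun d hd α hα0 hα1 P hunit hcode => ?_⟩
  have hP : IsSphericalCode (Iic (-β) ∪ {α}) P :=
    IsSphericalCode.mono (union_subset_union_left _ Icc_subset_Iic_self)
      ⟨hunit, fun v hv w hw => hcode v hv w hw⟩
  have hk : 2 / β ^ 2 ≤ 1 / α + k := (Nat.le_ceil _).trans (le_add_of_nonneg_left (by positivity))
  have hkd : (k : ℝ) ≤ k * d := le_mul_of_one_le_right k.cast_nonneg (by exact_mod_cast hd)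
  calc (P.card : ℝ)
      ≤ (1 + 1 / β) ^ k * (k + finrank ℝ (EuclideanSpace ℝ (Fin d)) * (1 + 2 / β ^ 2)) :=
        hP.card_le_of_two_div_sq_le hβ0 k hα0 hα1 hk
    _ ≤ (1 + 1 / β) ^ k * (k + (1 + 2 / β ^ 2)) * d := by
        rw [finrank_euclideanSpace_fin, mul_assoc]
        gcongr
        linarith

/-- **Theorem 1 (main theorem).** For every `0 < β ≤ 1` there is a constant `c_β > 0` such
that for every dimension `d ≥ 1` and every `0 < α < 1`, any `[-1,-β] ∪ {α}`-spherical code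
in `ℝ^d` (a finite set of unit vectors whose pairwise inner products lie in
`[-1,-β] ∪ {α}`) has at most `c_β · d` elements. -/
theorem spherical_code_linear_bound (β : ℝ) (hβ0 : 0 < β) (hβ1 : β ≤ 1) :
    ∃ c : ℝ, 0 < c ∧ ∀ d : ℕ, 1 ≤ d → ∀ α : ℝ, 0 < α → α < 1 →
      ∀ P : Finset (EuclideanSpace ℝ (Fin d)),
        (∀ v ∈ P, ‖v‖ = 1) →
        (∀ v ∈ P, ∀ w ∈ P, v ≠ w → ⟪v, w⟫ ∈ Set.Icc (-1 : ℝ) (-β) ∪ {α}) →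
        (P.card : ℝ) ≤ c * d :=
  spherical_code_linear_bound_general β hβ0
end

section
/- For every real number α with 0 < α < 1 there exists a constant c_α > 0 such that for every dimension d ≥ 1, every set of unit vectors in R^d in which the inner product of any two distinct vectors belongs to {-α, α} has at most c_α · d elements. Equivalently, the number of equiangular lines in R^d with common angle arccos α is at most c_α · d. -/
/-!
Call a finite set on the sphere `‖w‖² = N` whose points are pairwise at squared distance
`2(1 - α)` or `2(1 + α)` a two-distance set; an equiangular set of unit vectors is one with
`N = 1`.

If `N ≤ 1 - α + α² / 2`, the far pairs form a graph of maximum degree at most `1 + 2 / α²`: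
projecting the far neighbours of a point `u` onto `u^⊥` gives vectors of norm at most `1` that
are pairwise obtuse by a margin `α² / 2`. A greedy independent set, of size at least
`|W| / (Δ + 1)`, is a regular simplex and so has at most `d + 1` points.

Otherwise, split `W \ {u}` by the inner product `c` with `u` and project each class onto `u^⊥`.
Differences within a class are unchanged, so each class becomes a two-distance set with `N`
lowered by `c² / N ≥ α⁴ / 4`. Starting from `N = 1`, the first case applies after at most
`4 / α³` such steps, each of which doubles the bound, so `|W| ≤ 2 ^ ⌈4 / α³⌉ · O(d / α²)`.
-/

open scoped RealInnerProductSpace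

open Finset Matrix Module

theorem Finset.exists_subset_pairwise_not_card_le {α : Type*} [DecidableEq α]
    {r : α → α → Prop} [DecidableRel r] (hr : Std.Symm r) (Δ : ℕ) (s : Finset α)
    (hdeg : ∀ x ∈ s, #{y ∈ s | r x y} ≤ Δ) :
    ∃ t ⊆ s, (t : Set α).Pairwise (fun x y => ¬ r x y) ∧ #s ≤ (Δ + 1) * #t := by
  induction s using Finset.strongInduction with
  | H s ih =>
  obtain rfl | ⟨u, hu⟩ := s.eq_empty_or_nonempty
  · exact ⟨∅, empty_subset _, by simp, by simp⟩
  set s' := {y ∈ s.erase u | ¬ r u y}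
  have hs' : s' ⊂ s := (filter_subset _ _).trans_ssubset (erase_ssubset hu)
  obtain ⟨t, hts, ht, hcard⟩ := ih s' hs' fun x hx =>
    (card_le_card (filter_subset_filter _ hs'.subset)).trans (hdeg x (hs'.subset hx))
  have hnot_adj : ∀ y ∈ t, y ≠ u ∧ ¬ r u y := fun y hy =>
    have hy' := mem_filter.mp (hts hy)
    ⟨ne_of_mem_erase hy'.1, hy'.2⟩
  refine ⟨insert u t, insert_subset hu (hts.trans hs'.subset), ?_, ?_⟩
  · rw [coe_insert, Set.pairwise_insert]
    exact ⟨ht, fun y hy _ => ⟨(hnot_adj y hy).2, fun h => (hnot_adj y hy).2 (hr.symm _ _ h)⟩⟩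
  · have hcover : s ⊆ insert u ({y ∈ s | r u y} ∪ s') := fun y hy => by
      by_cases hyu : y = u <;> by_cases hy' : r u y <;> simp [s', hy, hyu, hy']
    have hut : u ∉ t := fun h => (hnot_adj u h).1 rfl
    calc #s ≤ #{y ∈ s | r u y} + #s' + 1 :=
          (card_le_card hcover).trans ((card_insert_le _ _).trans (by grw [card_union_le]))
      _ ≤ Δ + (Δ + 1) * #t + 1 := by grw [hdeg u hu, hcard]
      _ = (Δ + 1) * #(insert u t) := by rw [card_insert_of_notMem hut]; ring

section InnerProductSpace

variable {E : Type*} [NormedAddCommGroup E] [InnerProductSpace ℝ E]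

theorem Finset.card_sub_one_mul_le_of_pairwise_inner_le_neg {V : Finset E} {N β : ℝ}
    (hV : V.Nonempty) (hnorm : ∀ v ∈ V, ‖v‖ ^ 2 ≤ N)
    (hinner : (V : Set E).Pairwise fun v w => ⟪v, w⟫ ≤ -β) :
    (#V - 1 : ℝ) * β ≤ N := by
  classical
  have hrow : ∀ v ∈ V, ⟪v, ∑ w ∈ V, w⟫ ≤ N - (#V - 1) * β := by
    intro v hv
    have hrest : ∑ w ∈ V.erase v, ⟪v, w⟫ ≤ #(V.erase v) • (-β) :=
      sum_le_card_nsmul _ _ _ fun w hw =>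
        hinner hv (mem_of_mem_erase hw) (ne_of_mem_erase hw).symm
    rw [card_erase_of_mem hv, nsmul_eq_mul, Nat.cast_pred hV.card_pos] at hrest
    rw [inner_sum, ← add_sum_erase V _ hv, real_inner_self_eq_norm_sq]
    linarith [hnorm v hv]
  have hsum : 0 ≤ #V * (N - (#V - 1) * β) :=
    calc (0 : ℝ) ≤ ‖∑ w ∈ V, w‖ ^ 2 := by positivity
      _ = ∑ v ∈ V, ⟪v, ∑ w ∈ V, w⟫ := by rw [← real_inner_self_eq_norm_sq, sum_inner]
      _ ≤ #V • (N - (#V - 1) * β) := sum_le_card_nsmul _ _ _ hrow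
      _ = #V * (N - (#V - 1) * β) := nsmul_eq_mul _ _
  have hpos : (0 : ℝ) < #V := by exact_mod_cast hV.card_pos
  linarith [(mul_nonneg_iff_of_pos_left hpos).mp hsum]

theorem Finset.card_le_finrank_add_one_of_pairwise_norm_sub_sq_eq [FiniteDimensional ℝ E]
    {W : Finset E} {D : ℝ} (hW : (W : Set E).Pairwise fun v w => ‖v - w‖ ^ 2 = D) :
    #W ≤ finrank ℝ E + 1 := by
  classical
  obtain rfl | ⟨w₀, hw₀⟩ := W.eq_empty_or_nonempty
  · simp
  set T := W.erase w₀
  suffices LinearIndependent ℝ (fun x : T => (x : E) - w₀) by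
    have := this.fintype_card_le_finrank
    rw [Fintype.card_coe] at this
    have : #T + 1 = #W := card_erase_add_one hw₀
    omega
  obtain hT | ⟨x₁, hx₁⟩ := T.eq_empty_or_nonempty
  · have : IsEmpty T := Finset.isEmpty_coe_sort.mpr hT
    exact linearIndependent_empty_type
  have hmem : ∀ x ∈ T, x ∈ W ∧ x ≠ w₀ := fun x hx => ⟨mem_of_mem_erase hx, ne_of_mem_erase hx⟩
  have hD : 0 < D := by
    rw [← hW (hmem x₁ hx₁).1 hw₀ (hmem x₁ hx₁).2]
    have := sub_ne_zero.mpr (hmem x₁ hx₁).2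
    positivity
  -- The Gram matrix of the edges from `w₀` is `(D / 2) (I + J)`.
  have hgram : gram ℝ (fun x : T => (x : E) - w₀) = (D / 2) • (1 + vecMulVec 1 (star 1)) := by
    ext ⟨x, hx⟩ ⟨y, hy⟩
    simp only [gram, of_apply, vecMulVec, Pi.one_apply, Pi.star_apply, star_trivial, mul_one,
      Matrix.smul_apply, Matrix.add_apply, one_apply, Subtype.mk.injEq, smul_eq_mul]
    have hx0 : ‖x - w₀‖ ^ 2 = D := hW (hmem x hx).1 hw₀ (hmem x hx).2
    split_ifs with h
    · subst h
      rw [real_inner_self_eq_norm_sq, hx0]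
      ring
    · have hy0 : ‖y - w₀‖ ^ 2 = D := hW (hmem y hy).1 hw₀ (hmem y hy).2
      have hxy : ‖x - y‖ ^ 2 = D := hW (hmem x hx).1 (hmem y hy).1 h
      have := norm_sub_sq_real (x - w₀) (y - w₀)
      rw [sub_sub_sub_cancel_right] at this
      linarith
  exact linearIndependent_of_posDef_gram <| hgram ▸
    (PosDef.one.add_posSemidef (posSemidef_vecMulVec_self_star 1)).smul (half_pos hD)

structure IsTwoDistanceSet (α N : ℝ) (W : Finset E) : Prop where
  norm_sq : ∀ w ∈ W, ‖w‖ ^ 2 = N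
  pairwise : (W : Set E).Pairwise fun v w => ‖v - w‖ ^ 2 = 2 * (1 - α) ∨ ‖v - w‖ ^ 2 = 2 * (1 + α)

namespace IsTwoDistanceSet

variable {α N : ℝ} {W : Finset E} {u v w : E}

theorem inner_eq (hW : IsTwoDistanceSet α N W) (hv : v ∈ W) (hw : w ∈ W) :
    ⟪v, w⟫ = N - ‖v - w‖ ^ 2 / 2 := by
  have := norm_sub_sq_real v w
  rw [hW.norm_sq v hv, hW.norm_sq w hw] at this
  linarith

theorem inner_eq_or (hW : IsTwoDistanceSet α N W) (hv : v ∈ W) (hw : w ∈ W) (hvw : v ≠ w) :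
    ⟪v, w⟫ = N - 1 + α ∨ ⟪v, w⟫ = N - 1 - α := by
  rw [hW.inner_eq hv hw]
  rcases hW.pairwise hv hw hvw with h | h <;> rw [h]
  exacts [.inl (by ring), .inr (by ring)]

theorem norm_sub_sq_le (hW : IsTwoDistanceSet α N W) (hv : v ∈ W) (hw : w ∈ W) :
    ‖v - w‖ ^ 2 ≤ 4 * N := by
  have hadd := norm_add_sq_real v w
  have hsub := norm_sub_sq_real v w
  rw [hW.norm_sq v hv, hW.norm_sq w hw] at hadd hsub
  linarith [sq_nonneg ‖v + w‖]

/-- `V` is the projection of `S` onto `u^⊥`, which preserves differences within `S`. -/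
theorem exists_proj (hW : IsTwoDistanceSet α N W) (hu : u ∈ W) (hN : N ≠ 0) {S : Finset E}
    (hS : S ⊆ W) {c : ℝ} (hc : ∀ y ∈ S, ⟪u, y⟫ = c) :
    ∃ V : Finset E, #V = #S ∧ IsTwoDistanceSet α (N - c ^ 2 / N) V := by
  classical
  have hinj : Function.Injective fun y : E => y - (c / N) • u := sub_left_injective
  refine ⟨S.image fun y => y - (c / N) • u, card_image_of_injective _ hinj, ?_, ?_⟩
  · simp only [forall_mem_image]
    intro y hy
    rw [norm_sub_sq_real, inner_smul_right, real_inner_comm, hc y hy, norm_smul, mul_pow,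
      Real.norm_eq_abs, sq_abs, hW.norm_sq y (hS hy), hW.norm_sq u hu]
    field_simp
    ring
  · rw [coe_image, hinj.injOn.pairwise_image]
    intro y hy y' hy' hne
    simp only [Function.onFun, sub_sub_sub_cancel_right]
    exact hW.pairwise (hS hy) (hS hy') hne

theorem card_le_card_filter_inner_add (hW : IsTwoDistanceSet α N W) (hu : u ∈ W) :
    #W ≤ #{y ∈ W | ⟪u, y⟫ = N - 1 + α} + #{y ∈ W | ⟪u, y⟫ = N - 1 - α} + 1 := by
  classical
  have hcover : W ⊆ insert u ({y ∈ W | ⟪u, y⟫ = N - 1 + α} ∪ {y ∈ W | ⟪u, y⟫ = N - 1 - α}) := by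
    intro y hy
    by_cases hyu : y = u
    · simp [hyu]
    rcases hW.inner_eq_or hu hy (Ne.symm hyu) with h | h <;> simp [hy, h]
  exact (card_le_card hcover).trans ((card_insert_le _ _).trans
    (Nat.add_le_add_right (card_union_le _ _) 1))

theorem card_far_le (hW : IsTwoDistanceSet α N W) (hα0 : 0 < α) (hα1 : α < 1)
    (hN : N ≤ 1 - α + α ^ 2 / 2) (hu : u ∈ W) :
    (#{y ∈ W | ‖u - y‖ ^ 2 = 2 * (1 + α)} : ℝ) ≤ 1 + 2 / α ^ 2 := by
  set F := {y ∈ W | ‖u - y‖ ^ 2 = 2 * (1 + α)}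
  obtain hF | ⟨y₀, hy₀⟩ := F.eq_empty_or_nonempty
  · rw [hF, card_empty, Nat.cast_zero]
    positivity
  have hNpos : 0 < N := by
    have := hW.norm_sub_sq_le hu (mem_filter.mp hy₀).1
    rw [(mem_filter.mp hy₀).2] at this
    linarith
  set b := N - 1 - α
  have hb : ∀ y ∈ F, ⟪u, y⟫ = b := fun y hy => by
    rw [hW.inner_eq hu (mem_filter.mp hy).1, (mem_filter.mp hy).2]
    ring
  obtain ⟨V, hVF, hV⟩ := hW.exists_proj hu hNpos.ne' (filter_subset _ _) hb
  have hb2 : α ^ 2 ≤ b ^ 2 / N := by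
    have hbα : b ≤ -α := by nlinarith
    rw [le_div_iff₀ hNpos]
    nlinarith
  have hobtuse := card_sub_one_mul_le_of_pairwise_inner_le_neg (N := 1) (β := α ^ 2 / 2)
    (card_pos.mp (hVF ▸ card_pos.mpr ⟨y₀, hy₀⟩))
    (fun v hv => by rw [hV.norm_sq v hv]; nlinarith [div_nonneg (sq_nonneg b) hNpos.le])
    (fun v hv w hw hvw => by rcases hV.inner_eq_or hv hw hvw with h | h <;> rw [h] <;> linarith)
  rw [hVF] at hobtuse
  have : (#F - 1 : ℝ) ≤ 2 / α ^ 2 := by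
    rw [le_div_iff₀ (by positivity)]
    linarith
  linarith

theorem card_le_of_norm_sq_le [FiniteDimensional ℝ E] (hW : IsTwoDistanceSet α N W) (hα0 : 0 < α)
    (hα1 : α < 1) (hN : N ≤ 1 - α + α ^ 2 / 2) :
    #W ≤ (⌊1 + 2 / α ^ 2⌋₊ + 1) * (finrank ℝ E + 1) := by
  classical
  obtain ⟨t, hts, ht, hcard⟩ := W.exists_subset_pairwise_not_card_le
    (r := fun v w => ‖v - w‖ ^ 2 = 2 * (1 + α)) ⟨fun v w h => by rwa [norm_sub_rev]⟩ _
    fun u hu => Nat.le_floor (hW.card_far_le hα0 hα1 hN hu)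
  have ht_card : #t ≤ finrank ℝ E + 1 :=
    card_le_finrank_add_one_of_pairwise_norm_sub_sq_eq fun v hv w hw hvw =>
      (hW.pairwise (hts hv) (hts hw) hvw).resolve_right (ht hv hw hvw)
  exact hcard.trans (Nat.mul_le_mul_left _ ht_card)

theorem card_lt_two_pow_mul [FiniteDimensional ℝ E] (hα0 : 0 < α) (hα1 : α < 1) (ℓ : ℕ)
    (hW : IsTwoDistanceSet α N W) (hN1 : N ≤ 1) (hNℓ : N ≤ 1 - α + α ^ 2 / 2 + ℓ * (α ^ 4 / 4)) :
    #W < 2 ^ ℓ * ((⌊1 + 2 / α ^ 2⌋₊ + 1) * (finrank ℝ E + 1) + 1) := by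
  set K := (⌊1 + 2 / α ^ 2⌋₊ + 1) * (finrank ℝ E + 1)
  induction ℓ generalizing N W with
  | zero =>
    have := hW.card_le_of_norm_sq_le hα0 hα1 (by simpa using hNℓ)
    omega
  | succ ℓ ih =>
    by_cases hsmall : N ≤ 1 - α + α ^ 2 / 2
    · have : #W ≤ K := hW.card_le_of_norm_sq_le hα0 hα1 hsmall
      calc #W < K + 1 := Nat.lt_succ_of_le this
        _ ≤ 2 ^ (ℓ + 1) * (K + 1) := Nat.le_mul_of_pos_left _ (by positivity)
    obtain rfl | ⟨u, hu⟩ := W.eq_empty_or_nonempty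
    · simp
    rw [not_le] at hsmall
    have hNpos : 0 < N := by nlinarith
    have hclass : ∀ c, c = N - 1 + α ∨ c = N - 1 - α → #{y ∈ W | ⟪u, y⟫ = c} < 2 ^ ℓ * (K + 1) := by
      intro c hc
      obtain ⟨V, hVS, hV⟩ := hW.exists_proj hu hNpos.ne' (filter_subset _ _)
        (c := c) fun y hy => (mem_filter.mp hy).2
      have hdrop : α ^ 4 / 4 ≤ c ^ 2 / N := by
        rw [le_div_iff₀ hNpos]
        have : α ^ 4 / 4 ≤ c ^ 2 := by rcases hc with rfl | rfl <;> nlinarith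
        nlinarith
      rw [← hVS]
      exact ih hV (by linarith [div_nonneg (sq_nonneg c) hNpos.le]) (by push_cast at hNℓ; linarith)
    have := hW.card_le_card_filter_inner_add hu
    have := hclass _ (.inl rfl)
    have := hclass _ (.inr rfl)
    rw [pow_succ, mul_right_comm]
    omega

end IsTwoDistanceSet

end InnerProductSpace

/-- **Equiangular lines.** For every `0 < α < 1` there is a constant `c_α > 0` such that
for every dimension `d ≥ 1`, any finite set of unit vectors in `ℝ^d` in which the inner
product of any two distinct vectors is `α` or `-α` has at most `c_α · d` elements.
Equivalently, the number of equiangular lines in `ℝ^d` with common angle `arccos α` is at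
most `c_α · d`. -/
theorem equiangular_lines_linear_bound (α : ℝ) (hα0 : 0 < α) (hα1 : α < 1) :
    ∃ c : ℝ, 0 < c ∧ ∀ d : ℕ, 1 ≤ d →
      ∀ P : Finset (EuclideanSpace ℝ (Fin d)),
        (∀ v ∈ P, ‖v‖ = 1) →
        (∀ v ∈ P, ∀ w ∈ P, v ≠ w → ⟪v, w⟫ = -α ∨ ⟪v, w⟫ = α) →
        (P.card : ℝ) ≤ c * d := by
  obtain ⟨L, hL⟩ := exists_nat_ge (4 / α ^ 3)
  set Δ := ⌊1 + 2 / α ^ 2⌋₊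
  refine ⟨2 ^ L * (2 * Δ + 3), by positivity, fun d hd P hnorm hinner => ?_⟩
  have hP : IsTwoDistanceSet α 1 P := by
    refine ⟨fun v hv => by rw [hnorm v hv, one_pow], fun v hv w hw hvw => ?_⟩
    dsimp only
    rw [norm_sub_sq_real, hnorm v hv, hnorm w hw]
    rcases hinner v hv w hw hvw with h | h <;> rw [h]
    exacts [.inr (by ring), .inl (by ring)]
  have hL' : α ≤ L * (α ^ 4 / 4) := by
    calc α = 4 / α ^ 3 * (α ^ 4 / 4) := by field_simp
      _ ≤ L * (α ^ 4 / 4) := by gcongr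
  have hcard := hP.card_lt_two_pow_mul hα0 hα1 L le_rfl (by nlinarith)
  rw [finrank_euclideanSpace_fin] at hcard
  have hK : (Δ + 1) * (d + 1) + 1 ≤ (2 * Δ + 3) * d := by nlinarith
  calc (P.card : ℝ) ≤ (2 ^ L * ((Δ + 1) * (d + 1) + 1) : ℕ) := by exact_mod_cast hcard.le
    _ ≤ (2 ^ L * ((2 * Δ + 3) * d) : ℕ) := by exact_mod_cast Nat.mul_le_mul_left _ hK
    _ = 2 ^ L * (2 * Δ + 3) * d := by push_cast; ring
end

section
/- Let 0 < β ≤ 1 and 0 < α < 1. For an integer n ≥ 1 set φ = α/(1 + (n-1)α), and define R(m, n) = α²(n − m) + β² m − φ · ((n − m)α − mβ)² for real m. Let t* = (1 − α)(α − β) / (α(α + β)). Then for every integer n ≥ 1 + 8/β² and every real m with 1 ≤ m ≤ n − t* − 1, one has R(m, n) > α(1 − α) + (α + β)²/2. -/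
/-!
Multiplying `R(m,n) - α(1-α) - (α+β)²/2` by the denominator `1 + (n-1)α` of `φ` gives a
quadratic in `m` with leading coefficient `-α(α+β)²`, hence a concave function of `m`; so it
suffices to check positivity at the endpoints `m = 1` and `m = n - t* - 1`. At each endpoint,
after multiplying by `β²` (resp. `β²(α+β)²`), the value is a nonnegative multiple of
`β²(n-1) - 8` plus a polynomial in `α, β` all of whose terms are positive when `0 < β ≤ 1`.
-/

open Set

noncomputable def scaledGap (α β n m : ℝ) : ℝ :=
  (1 + (n - 1) * α) * (α ^ 2 * (n - m) + β ^ 2 * m - (α * (1 - α) + (α + β) ^ 2 / 2))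
    - α * ((n - m) * α - m * β) ^ 2

section ScaledGap

variable {α β : ℝ} (n : ℝ)

theorem concaveOn_scaledGap (hα : 0 ≤ α) : ConcaveOn ℝ univ (scaledGap α β n) := by
  refine ⟨convex_univ, fun x _ y _ a b ha hb hab => ?_⟩
  obtain rfl : b = 1 - a := by linarith
  have hdefect : scaledGap α β n (a • x + (1 - a) • y)
      - (a • scaledGap α β n x + (1 - a) • scaledGap α β n y)
      = α * (α + β) ^ 2 * (a * (1 - a)) * (x - y) ^ 2 := by
    simp only [scaledGap, smul_eq_mul]; ring
  have : 0 ≤ α * (α + β) ^ 2 * (a * (1 - a)) * (x - y) ^ 2 := by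
    have := mul_nonneg ha hb
    positivity
  linarith

theorem scaledGap_one_pos (hβ : 0 < β) (hβ1 : β ≤ 1) (hα : 0 < α) (h8 : 8 ≤ β ^ 2 * (n - 1)) :
    0 < scaledGap α β n 1 := by
  have hid : β ^ 2 * scaledGap α β n 1 = α * (α + β) ^ 2 / 2 * (β ^ 2 * (n - 1) - 8)
      + (α + β) ^ 2 * β ^ 2 / 2 + 4 * α ^ 2 * (α + 2 * β) + α * β ^ 2 * (1 - β) * (3 + β) := by
    simp only [scaledGap]; ring
  have h1 : 0 ≤ α * (α + β) ^ 2 / 2 * (β ^ 2 * (n - 1) - 8) :=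
    mul_nonneg (by positivity) (by linarith)
  have h2 : 0 ≤ α * β ^ 2 * (1 - β) * (3 + β) :=
    mul_nonneg (mul_nonneg (by positivity) (by linarith)) (by linarith)
  refine pos_of_mul_pos_right (a := β ^ 2) ?_ (sq_nonneg β)
  rw [hid]
  have : 0 < (α + β) ^ 2 * β ^ 2 / 2 + 4 * α ^ 2 * (α + 2 * β) := by positivity
  linarith

theorem scaledGap_right_endpoint_pos (hβ : 0 < β) (hβ1 : β ≤ 1) (hα : 0 < α) (h8 : 8 ≤ β ^ 2 * (n - 1)) :
    0 < scaledGap α β n (n - (1 - α) * (α - β) / (α * (α + β)) - 1) := by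
  have hid : β ^ 2 * (α + β) ^ 2 * scaledGap α β n (n - (1 - α) * (α - β) / (α * (α + β)) - 1)
      = α * (α + β) ^ 4 / 2 * (β ^ 2 * (n - 1) - 8)
        + (4 * α ^ 5 + 16 * α ^ 4 * β + α ^ 4 * β ^ 2 / 2 + α ^ 3 * β ^ 2 * (23 - β ^ 2)
          + α ^ 2 * β ^ 3 * (14 - β - 2 * β ^ 2) + α * β ^ 4 * (3 - β ^ 2) + β ^ 6 / 2) := by
    simp only [scaledGap]
    field_simp
    ring
  have h1 : 0 ≤ α * (α + β) ^ 4 / 2 * (β ^ 2 * (n - 1) - 8) :=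
    mul_nonneg (by positivity) (by linarith)
  have hβsq : β ^ 2 ≤ 1 := pow_le_one₀ hβ.le hβ1
  have h2 : 0 ≤ α ^ 3 * β ^ 2 * (23 - β ^ 2) := mul_nonneg (by positivity) (by linarith)
  have h3 : 0 ≤ α ^ 2 * β ^ 3 * (14 - β - 2 * β ^ 2) := mul_nonneg (by positivity) (by linarith)
  have h4 : 0 ≤ α * β ^ 4 * (3 - β ^ 2) := mul_nonneg (by positivity) (by linarith)
  have h5 : 0 < 4 * α ^ 5 + 16 * α ^ 4 * β + α ^ 4 * β ^ 2 / 2 + β ^ 6 / 2 := by positivity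
  refine pos_of_mul_pos_right (a := β ^ 2 * (α + β) ^ 2) ?_ (by positivity)
  rw [hid]
  linarith

theorem sub_bound_eq_scaledGap_div (m : ℝ) (hD : 1 + (n - 1) * α ≠ 0) :
    α ^ 2 * (n - m) + β ^ 2 * m - (α / (1 + (n - 1) * α)) * ((n - m) * α - m * β) ^ 2
      - (α * (1 - α) + (α + β) ^ 2 / 2) = scaledGap α β n m / (1 + (n - 1) * α) := by
  rw [scaledGap]
  generalize 1 + (n - 1) * α = D at hD ⊢
  field_simp
  ring

end ScaledGap

theorem quadratic_estimate_general (β α : ℝ) (hβ0 : 0 < β) (hβ1 : β ≤ 1)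
    (hα0 : 0 < α)
    (n : ℕ) (hn : (1 + 8 / β ^ 2 : ℝ) ≤ n)
    (m : ℝ) (hm1 : 1 ≤ m)
    (hm2 : m ≤ n - (1 - α) * (α - β) / (α * (α + β)) - 1) :
    α * (1 - α) + (α + β) ^ 2 / 2 <
      α ^ 2 * (n - m) + β ^ 2 * m -
        (α / (1 + (n - 1 : ℝ) * α)) * ((n - m) * α - m * β) ^ 2 := by
  have h8 : 8 ≤ β ^ 2 * ((n : ℝ) - 1) := by
    rw [← div_le_iff₀' (by positivity)]
    linarith
  have hD : 0 < 1 + ((n : ℝ) - 1) * α := by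
    have : 0 ≤ (n : ℝ) - 1 := by linarith [div_nonneg (by norm_num : (0 : ℝ) ≤ 8) (sq_nonneg β)]
    positivity
  have hgap : 0 < scaledGap α β n m :=
    (lt_min (scaledGap_one_pos n hβ0 hβ1 hα0 h8) (scaledGap_right_endpoint_pos n hβ0 hβ1 hα0 h8)).trans_le
      ((concaveOn_scaledGap n hα0.le).min_le_of_mem_Icc (mem_univ _) (mem_univ _) ⟨hm1, hm2⟩)
  rw [← sub_pos, sub_bound_eq_scaledGap_div n m hD.ne']
  exact div_pos hgap hD

/-- **Quadratic estimate.** Let `0 < β ≤ 1`, `0 < α < 1`, and for an integer `n ≥ 1` set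
`φ = α/(1 + (n-1)α)` and `R(m,n) = α²(n-m) + β²m − φ((n-m)α − mβ)²`. Let
`t* = (1-α)(α-β)/(α(α+β))`. Then for every integer `n ≥ 1 + 8/β²` and every real `m` with
`1 ≤ m ≤ n − t* − 1` we have `R(m,n) > α(1-α) + (α+β)²/2`. -/
theorem quadratic_estimate (β α : ℝ) (hβ0 : 0 < β) (hβ1 : β ≤ 1)
    (hα0 : 0 < α) (hα1 : α < 1)
    (n : ℕ) (hn1 : 1 ≤ n) (hn : (1 + 8 / β ^ 2 : ℝ) ≤ n)
    (m : ℝ) (hm1 : 1 ≤ m)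
    (hm2 : m ≤ n - (1 - α) * (α - β) / (α * (α + β)) - 1) :
    α * (1 - α) + (α + β) ^ 2 / 2 <
      α ^ 2 * (n - m) + β ^ 2 * m -
        (α / (1 + (n - 1 : ℝ) * α)) * ((n - m) * α - m * β) ^ 2 :=
  quadratic_estimate_general β α hβ0 hβ1 hα0 n hn m hm1 hm2
end

section
/- Let 0 < β ≤ 1 and 0 < α < 1. For an integer n ≥ 1 set φ = α/(1 + (n-1)α), and define R(m, n) = α²(n − m) + β² m − φ · ((n − m)α − mβ)² for real m. Let t* = (1 − α)(α − β) / (α(α + β)). Then R(m, n) = R(n − t* − m, n) for all real m; consequently, for fixed n, the quadratic R(·, n) attains its maximum at m = (n − t*)/2. -/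
/-!
`R(·, n)` is a quadratic in `m` with leading coefficient `-φ (α + β)²`, and completing the square
(using `φ (1 + (n - 1) α) = α`) puts its vertex at `(n - t*) / 2`. A quadratic is symmetric about
its vertex, and since `φ > 0` the vertex is its maximum.
-/

section VertexForm

variable {f : ℝ → ℝ} {k s : ℝ}

theorem apply_eq_apply_sub_of_vertex_form (hf : ∀ m, f m = f (s / 2) - k * (m - s / 2) ^ 2)
    (m : ℝ) : f m = f (s - m) := by
  rw [hf m, hf (s - m)]
  ring

theorem apply_le_apply_vertex_of_vertex_form (hf : ∀ m, f m = f (s / 2) - k * (m - s / 2) ^ 2)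
    (hk : 0 ≤ k) (m : ℝ) : f m ≤ f (s / 2) := by
  rw [hf m]
  exact sub_le_self _ (mul_nonneg hk (sq_nonneg _))

end VertexForm

noncomputable section

namespace QuadraticSymmetry

def φ (α n : ℝ) : ℝ := α / (1 + (n - 1) * α)

def R (α β n m : ℝ) : ℝ := α ^ 2 * (n - m) + β ^ 2 * m - φ α n * ((n - m) * α - m * β) ^ 2

def tStar (α β : ℝ) : ℝ := (1 - α) * (α - β) / (α * (α + β))

theorem φ_pos {α n : ℝ} (hα : 0 < α) (hn : 1 ≤ n) : 0 < φ α n :=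
  div_pos hα (by nlinarith)

theorem R_vertex_form {α β n : ℝ} (hα : α ≠ 0) (hαβ : α + β ≠ 0) (hD : 1 + (n - 1) * α ≠ 0)
    (m : ℝ) :
    R α β n m = R α β n ((n - tStar α β) / 2) -
      φ α n * (α + β) ^ 2 * (m - (n - tStar α β) / 2) ^ 2 := by
  unfold R φ tStar
  -- `field_simp` clears the denominator `1 + (n - 1) α` only once it is an opaque `D`
  generalize hDdef : 1 + (n - 1) * α = D at hD ⊢
  field_simp
  subst hDdef
  ring

end QuadraticSymmetry

end

theorem quadratic_symmetry_general (β α : ℝ) (hβ0 : 0 < β)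
    (hα0 : 0 < α) (n : ℕ) (hn1 : 1 ≤ n) :
    let φ : ℝ := α / (1 + (n - 1 : ℝ) * α)
    let R : ℝ → ℝ := fun m => α ^ 2 * ((n : ℝ) - m) + β ^ 2 * m -
      φ * (((n : ℝ) - m) * α - m * β) ^ 2
    let tstar : ℝ := (1 - α) * (α - β) / (α * (α + β))
    (∀ m : ℝ, R m = R ((n : ℝ) - tstar - m)) ∧
      ∀ m : ℝ, R m ≤ R (((n : ℝ) - tstar) / 2) := by
  intro φ R tstar
  have hn : (1 : ℝ) ≤ n := by exact_mod_cast hn1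
  have hφ : 0 < φ := QuadraticSymmetry.φ_pos hα0 hn
  have hvertex : ∀ m, R m = R ((n - tstar) / 2) - φ * (α + β) ^ 2 * (m - (n - tstar) / 2) ^ 2 :=
    QuadraticSymmetry.R_vertex_form hα0.ne' (by positivity) (div_ne_zero_iff.mp hφ.ne').2
  exact ⟨apply_eq_apply_sub_of_vertex_form hvertex,
    apply_le_apply_vertex_of_vertex_form hvertex (by positivity)⟩

/-- **Symmetry of the quadratic.** Let `0 < β ≤ 1`, `0 < α < 1`, and for an integer
`n ≥ 1` set `φ = α/(1 + (n-1)α)` and `R(m,n) = α²(n-m) + β²m − φ((n-m)α − mβ)²`. With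
`t* = (1-α)(α-β)/(α(α+β))`, we have `R(m,n) = R(n − t* − m, n)` for all real `m`;
consequently, for fixed `n`, the quadratic `R(·,n)` attains its maximum at
`m = (n − t*)/2`. -/
theorem quadratic_symmetry (β α : ℝ) (hβ0 : 0 < β) (hβ1 : β ≤ 1)
    (hα0 : 0 < α) (hα1 : α < 1) (n : ℕ) (hn1 : 1 ≤ n) :
    let φ : ℝ := α / (1 + (n - 1 : ℝ) * α)
    let R : ℝ → ℝ := fun m => α ^ 2 * ((n : ℝ) - m) + β ^ 2 * m -
      φ * (((n : ℝ) - m) * α - m * β) ^ 2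
    let tstar : ℝ := (1 - α) * (α - β) / (α * (α + β))
    (∀ m : ℝ, R m = R ((n : ℝ) - tstar - m)) ∧
      ∀ m : ℝ, R m ≤ R (((n : ℝ) - tstar) / 2) :=
  quadratic_symmetry_general β α hβ0 hα0 n hn1
end

section
/- Let 0 < β ≤ 1, 0 < α < 1 and ε > 0. Let p_1, …, p_n be unit vectors in R^d with ⟨p_i, p_j⟩ = α for all i ≠ j, and let W = span{p_1, …, p_n}. Let p^(1), …, p^(m) be unit vectors in R^d such that ⟨p^(i), p^(j)⟩ ∈ [-1, -β] ∪ {α} for all i ≠ j. Write p^(i) = v^(i) + u^(i) with v^(i) ∈ W and u^(i) orthogonal to W, and suppose ⟨v^(i), v^(j)⟩ > α + ε for all i ≠ j. Then m ≤ 1/ε + 1. -/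
/-! The components `u⁽ⁱ⁾` orthogonal to `W` have norm at most `1`, and since every
`⟪q⁽ⁱ⁾, q⁽ʲ⁾⟫` is at most `α` while `⟪v⁽ⁱ⁾, v⁽ʲ⁾⟫ > α + ε`, they have pairwise inner products
below `-ε`. The Gram sum `∑ᵢ ∑ⱼ ⟪u⁽ⁱ⁾, u⁽ʲ⁾⟫ = ‖∑ᵢ u⁽ⁱ⁾‖²` is nonnegative, yet at most
`m - m (m - 1) ε`; hence `(m - 1) ε ≤ 1`. -/

open scoped RealInnerProductSpace
open Finset

section
variable {E : Type*} [NormedAddCommGroup E] [InnerProductSpace ℝ E]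

theorem inner_add_add_of_mem_orthogonal {K : Submodule ℝ E} {v v' u u' : E} (hv : v ∈ K)
    (hv' : v' ∈ K) (hu : u ∈ Kᗮ) (hu' : u' ∈ Kᗮ) :
    ⟪v + u, v' + u'⟫ = ⟪v, v'⟫ + ⟪u, u'⟫ := by
  rw [inner_add_left, inner_add_right, inner_add_right,
    K.inner_right_of_mem_orthogonal hv hu', K.inner_left_of_mem_orthogonal hv' hu]
  ring

theorem norm_le_norm_add_of_mem_orthogonal {K : Submodule ℝ E} {v u : E} (hv : v ∈ K)
    (hu : u ∈ Kᗮ) : ‖u‖ ≤ ‖v + u‖ := by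
  have hsq : ‖v + u‖ * ‖v + u‖ = ‖v‖ * ‖v‖ + ‖u‖ * ‖u‖ :=
    norm_add_sq_eq_norm_sq_add_norm_sq_real (K.inner_right_of_mem_orthogonal hv hu)
  rw [mul_self_le_mul_self_iff (norm_nonneg _) (norm_nonneg _), hsq]
  linarith [mul_self_nonneg ‖v‖]

variable {ι : Type*} [Fintype ι]

theorem sum_sum_inner_nonneg (u : ι → E) : 0 ≤ ∑ i, ∑ j, ⟪u i, u j⟫ := by
  have h := real_inner_self_nonneg (x := ∑ i, u i)
  simp_rw [sum_inner, inner_sum] at h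
  exact h

theorem sum_sum_inner_le_of_inner_le_neg {ε : ℝ} (u : ι → E) (hnorm : ∀ i, ‖u i‖ ≤ 1)
    (hinner : ∀ i j, i ≠ j → ⟪u i, u j⟫ ≤ -ε) :
    ∑ i, ∑ j, ⟪u i, u j⟫ ≤
      Fintype.card ι - Fintype.card ι * (Fintype.card ι - 1) * ε := by
  classical
  calc ∑ i, ∑ j, ⟪u i, u j⟫
      ≤ ∑ i : ι, ∑ j : ι, (-ε + if i = j then 1 + ε else 0) := by
        refine sum_le_sum fun i _ => sum_le_sum fun j _ => ?_
        by_cases hij : i = j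
        · subst hij
          have : ‖u i‖ ^ 2 ≤ 1 := pow_le_one₀ (norm_nonneg _) (hnorm i)
          simpa [real_inner_self_eq_norm_sq] using this
        · simpa [hij] using hinner i j hij
    _ = Fintype.card ι - Fintype.card ι * (Fintype.card ι - 1) * ε := by
        simp only [sum_add_distrib, sum_ite_eq, mem_univ, if_true, sum_const, card_univ,
          nsmul_eq_mul]
        ring

theorem le_one_div_add_one_of_mul_sub_one_mul_le {m : ℕ} {ε : ℝ} (hε : 0 < ε)
    (h : (m : ℝ) * (m - 1) * ε ≤ m) : (m : ℝ) ≤ 1 / ε + 1 := by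
  rcases Nat.eq_zero_or_pos m with rfl | hm
  · simp only [Nat.cast_zero]
    positivity
  · have hm1 : (1 : ℝ) ≤ m := by exact_mod_cast hm
    have : ((m : ℝ) - 1) * ε ≤ 1 := by nlinarith
    have : (m : ℝ) - 1 ≤ 1 / ε := by rwa [le_div_iff₀ hε]
    linarith

theorem card_le_one_div_add_one_of_inner_le_neg {ε : ℝ} (hε : 0 < ε) (u : ι → E)
    (hnorm : ∀ i, ‖u i‖ ≤ 1) (hinner : ∀ i j, i ≠ j → ⟪u i, u j⟫ ≤ -ε) :
    (Fintype.card ι : ℝ) ≤ 1 / ε + 1 :=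
  le_one_div_add_one_of_mul_sub_one_mul_le hε <| by
    linarith [sum_sum_inner_nonneg u, sum_sum_inner_le_of_inner_le_neg u hnorm hinner]

end

theorem bad_vectors_bound_general (d n m : ℕ) (β α ε : ℝ) (hβ0 : 0 < β)
    (hα0 : 0 < α) (hε : 0 < ε)
    (p : Fin n → EuclideanSpace ℝ (Fin d))
    (q : Fin m → EuclideanSpace ℝ (Fin d))
    (hqnorm : ∀ i, ‖q i‖ = 1)
    (hqinner : ∀ i j, i ≠ j → ⟪q i, q j⟫ ∈ Set.Icc (-1 : ℝ) (-β) ∪ {α})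
    (v u : Fin m → EuclideanSpace ℝ (Fin d))
    (hv : ∀ i, v i ∈ Submodule.span ℝ (Set.range p))
    (hu : ∀ i, u i ∈ (Submodule.span ℝ (Set.range p))ᗮ)
    (hq_eq : ∀ i, q i = v i + u i)
    (hvinner : ∀ i j, i ≠ j → α + ε < ⟪v i, v j⟫) :
    (m : ℝ) ≤ 1 / ε + 1 := by
  have hunorm : ∀ i, ‖u i‖ ≤ 1 := fun i => by
    simpa only [← hq_eq, hqnorm] using norm_le_norm_add_of_mem_orthogonal (hv i) (hu i)
  have hqle : ∀ i j, i ≠ j → ⟪q i, q j⟫ ≤ α := fun i j hij => by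
    rcases hqinner i j hij with ⟨-, hle⟩ | heq
    · linarith
    · exact heq.le
  have huinner : ∀ i j, i ≠ j → ⟪u i, u j⟫ ≤ -ε := fun i j hij => by
    have hsplit := inner_add_add_of_mem_orthogonal (hv i) (hv j) (hu i) (hu j)
    rw [← hq_eq, ← hq_eq] at hsplit
    linarith [hqle i j hij, hvinner i j hij]
  simpa using card_le_one_div_add_one_of_inner_le_neg hε u hunorm huinner

/-- **Lemma 6.** Let `0 < β ≤ 1`, `0 < α < 1` and `ε > 0`. Let `p_1, …, p_n` be unit
vectors with pairwise inner products `α`, spanning `W`, and let `q^(1), …, q^(m)` be unit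
vectors with pairwise inner products in `[-1,-β] ∪ {α}`. Write `q^(i) = v^(i) + u^(i)`
with `v^(i) ∈ W` and `u^(i) ⊥ W`. If `⟪v^(i), v^(j)⟫ > α + ε` for all `i ≠ j`, then
`m ≤ 1/ε + 1`. -/
theorem bad_vectors_bound (d n m : ℕ) (β α ε : ℝ) (hβ0 : 0 < β) (hβ1 : β ≤ 1)
    (hα0 : 0 < α) (hα1 : α < 1) (hε : 0 < ε)
    (p : Fin n → EuclideanSpace ℝ (Fin d))
    (hpnorm : ∀ i, ‖p i‖ = 1)
    (hpinner : ∀ i j, i ≠ j → ⟪p i, p j⟫ = α)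
    (q : Fin m → EuclideanSpace ℝ (Fin d))
    (hqnorm : ∀ i, ‖q i‖ = 1)
    (hqinner : ∀ i j, i ≠ j → ⟪q i, q j⟫ ∈ Set.Icc (-1 : ℝ) (-β) ∪ {α})
    (v u : Fin m → EuclideanSpace ℝ (Fin d))
    (hv : ∀ i, v i ∈ Submodule.span ℝ (Set.range p))
    (hu : ∀ i, u i ∈ (Submodule.span ℝ (Set.range p))ᗮ)
    (hq_eq : ∀ i, q i = v i + u i)
    (hvinner : ∀ i j, i ≠ j → α + ε < ⟪v i, v j⟫) :
    (m : ℝ) ≤ 1 / ε + 1 :=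
  bad_vectors_bound_general d n m β α ε hβ0 hα0 hε p q hqnorm hqinner v u hv hu hq_eq hvinner
end

section
/- Let 0 < β ≤ 1 and δ > 0. Then there exists a constant M = M(β, δ) such that the following holds for every 0 < α < 1, every dimension d, and every [-1,-β] ∪ {α}-spherical code P in R^d. Define a graph G on vertex set P by joining v and v' when ⟨v, v'⟩ ∈ [-1, -β]. For every subset U ⊆ P, if I is an independent set in the induced subgraph G[U] of maximum size, then there is a subset U' ⊆ U \ I with |U'| ≥ |U| − M·|I| such that every vertex of U' is adjacent in G to at least (1 − δ)·|I| vertices of I. -/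
/-!
Vertices of `I` are pairwise non-adjacent unit vectors of the code, hence pairwise at inner
product `α`. If `|I|` is small, `|U|` is bounded by the Erdős–Szekeres bound, since a clique of
unit vectors at pairwise inner product `≤ -β` has at most `1 + 1/β` elements (`‖∑ v‖² ≥ 0`).

Otherwise let `B ⊆ U \ I` be the vertices with fewer than `(1 - δ)|I|` neighbours in `I`. Each
has a neighbour in `I` (by maximality of `I`) and more than `δ|I|` vectors of `I` at inner
product `α`. By double counting, some `w ∈ I` is at inner product `α` with at least `δ|B|/2`
vertices of `B`. Projecting these vertices and `I \ {w}` onto `w`ᗮ and normalising maps inner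
products `t` to `(t - α²)/(1 - α²)`: the new value of `α` is `α/(1 + α)`, so `1/α` grows by one,
and inner products `≤ -β` stay `≤ -β`. After `⌈2/β²⌉` steps `α ≤ β²/2`, and then the Gram bound
`‖∑ v + nβ u‖² ≥ 0` shows that every `u ∈ I` has at most `2/β²` neighbours in `B`.
-/

open Finset
open scoped RealInnerProductSpace Classical

namespace SimpleGraph

variable {X : Type*}

lemma card_le_of_isClique_subset_filter_adj {H : SimpleGraph X} {V : Finset X} {v : X} {n : ℕ}
    [DecidablePred (H.Adj v)] (hv : v ∈ V) (h : ∀ C ⊆ V, H.IsClique (C : Set X) → #C ≤ n + 1) :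
    ∀ C ⊆ V.filter (H.Adj v), H.IsClique (C : Set X) → #C ≤ n := by
  intro C hC hclique
  have hvC : v ∉ C := fun hvC ↦ H.irrefl (mem_filter.1 (hC hvC)).2
  have hins := h (insert v C) (insert_subset hv (hC.trans (filter_subset _ _))) <| by
    rw [coe_insert, isClique_insert]
    exact ⟨hclique, fun b hb _ ↦ (mem_filter.1 (hC hb)).2⟩
  rw [card_insert_of_notMem hvC] at hins
  omega

lemma card_le_card_filter_adj_add_card_filter_compl_adj (G : SimpleGraph X) {V : Finset X}
    {v : X} : #V ≤ #(V.filter (G.Adj v)) + #(V.filter (Gᶜ.Adj v)) + 1 := by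
  have hcover : V ⊆ insert v (V.filter (G.Adj v) ∪ V.filter (Gᶜ.Adj v)) := by
    intro x hx
    by_cases hxv : v = x
    · exact hxv ▸ mem_insert_self _ _
    · by_cases hadj : G.Adj v x <;> simp [hx, hadj, hxv, compl_adj]
  calc #V ≤ #(V.filter (G.Adj v) ∪ V.filter (Gᶜ.Adj v)) + 1 :=
        (card_le_card hcover).trans (card_insert_le _ _)
    _ ≤ _ := by grw [card_union_le]

/-- The Erdős–Szekeres bound `R(a + 1, b + 1) ≤ (a + b).choose a` for the Ramsey numbers. -/
theorem card_lt_choose_of_forall_isClique_card_le (G : SimpleGraph X) (a b : ℕ) (V : Finset X)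
    (hG : ∀ C ⊆ V, G.IsClique (C : Set X) → #C ≤ a)
    (hGc : ∀ C ⊆ V, Gᶜ.IsClique (C : Set X) → #C ≤ b) : #V < (a + b).choose a := by
  have eq_empty : ∀ (H : SimpleGraph X) (V : Finset X),
      (∀ C ⊆ V, H.IsClique (C : Set X) → #C ≤ 0) → V = ∅ := by
    intro H V h
    by_contra hV
    obtain ⟨v, hv⟩ := nonempty_iff_ne_empty.2 hV
    simpa using h {v} (singleton_subset_iff.2 hv) (by simp)
  induction a generalizing b V with
  | zero => simp [eq_empty G V hG]
  | succ a iha =>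
    induction b generalizing V with
    | zero => simp [eq_empty Gᶜ V hGc]
    | succ b ihb =>
      rcases V.eq_empty_or_nonempty with rfl | ⟨v, hv⟩
      · exact Nat.choose_pos (by omega)
      have hadj := iha (b + 1) (V.filter (G.Adj v))
        (card_le_of_isClique_subset_filter_adj hv hG)
        (fun C hC ↦ hGc C (hC.trans (filter_subset _ _)))
      have hnonadj := ihb (V.filter (Gᶜ.Adj v))
        (fun C hC ↦ hG C (hC.trans (filter_subset _ _)))
        (card_le_of_isClique_subset_filter_adj hv hGc)
      have hpascal : (a + 1 + (b + 1)).choose (a + 1)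
          = (a + (b + 1)).choose a + (a + 1 + b).choose (a + 1) := by
        rw [show a + 1 + (b + 1) = a + b + 1 + 1 by omega, Nat.choose_succ_succ',
          show a + (b + 1) = a + b + 1 by omega, show a + 1 + b = a + b + 1 by omega]
      have hsplit := G.card_le_card_filter_adj_add_card_filter_compl_adj (V := V) (v := v)
      omega

end SimpleGraph

lemma Finset.exists_mul_card_le_mul_card_bipartiteBelow {α β : Type*} {s : Finset α}
    {t : Finset β} {r : α → β → Prop} [∀ a b, Decidable (r a b)] {m : ℕ} (ht : t.Nonempty)
    (h : ∀ a ∈ s, m ≤ #(t.bipartiteAbove r a)) :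
    ∃ b ∈ t, m * #s ≤ #t * #(s.bipartiteBelow r b) := by
  refine exists_le_of_sum_le ht ?_
  have hcount : m * #s ≤ ∑ b ∈ t, #(s.bipartiteBelow r b) := by
    rw [← sum_card_bipartiteAbove_eq_sum_card_bipartiteBelow, mul_comm, ← smul_eq_mul]
    exact card_nsmul_le_sum _ _ _ h
  rw [sum_const, smul_eq_mul, ← mul_sum]
  exact Nat.mul_le_mul_left _ hcount

lemma Finset.exists_rel_of_forall_card_le {X : Type*} [DecidableEq X] {r : X → X → Prop}
    (hr : ∀ v w, r v w → r w v) {U I : Finset X} (hIU : I ⊆ U)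
    (hI : ∀ v ∈ I, ∀ w ∈ I, v ≠ w → ¬r v w)
    (hmax : ∀ J ⊆ U, (∀ v ∈ J, ∀ w ∈ J, v ≠ w → ¬r v w) → #J ≤ #I) {v : X} (hv : v ∈ U \ I) :
    ∃ w ∈ I, r v w := by
  by_contra! hnone
  obtain ⟨hvU, hvI⟩ := mem_sdiff.1 hv
  have hins := hmax (insert v I) (insert_subset hvU hIU) <| by
    simp only [mem_insert, forall_eq_or_imp]
    refine ⟨⟨fun h ↦ (h rfl).elim, fun w hw _ ↦ hnone w hw⟩,
      fun w hw ↦ ⟨fun _ hrw ↦ hnone w hw (hr _ _ hrw), hI w hw⟩⟩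
  rw [card_insert_of_notMem hvI] at hins
  omega

variable {E : Type*} [NormedAddCommGroup E] [InnerProductSpace ℝ E]

lemma inner_sum_self_le {F : Finset E} {γ : ℝ} (hunit : ∀ v ∈ F, ⟪v, v⟫ = 1)
    (hpair : ∀ v ∈ F, ∀ u ∈ F, v ≠ u → ⟪v, u⟫ ≤ γ) :
    ⟪∑ v ∈ F, v, ∑ v ∈ F, v⟫ ≤ #F + #F * (#F - 1) * γ := by
  have hrow : ∀ v ∈ F, ∑ u ∈ F, ⟪v, u⟫ ≤ 1 + (#F - 1) * γ := by
    intro v hv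
    have hrest : ∑ u ∈ F.erase v, ⟪v, u⟫ ≤ #(F.erase v) • γ :=
      sum_le_card_nsmul _ _ _ fun u hu ↦
        hpair v hv u (mem_of_mem_erase hu) (ne_of_mem_erase hu).symm
    have hcard : (#(F.erase v) : ℝ) = #F - 1 := by
      rw [← card_erase_add_one hv]; push_cast; ring
    rw [← add_sum_erase F _ hv, hunit v hv]
    rw [nsmul_eq_mul, hcard] at hrest
    linarith
  calc ⟪∑ v ∈ F, v, ∑ v ∈ F, v⟫ = ∑ v ∈ F, ∑ u ∈ F, ⟪v, u⟫ := by
        simp only [sum_inner, inner_sum]; exact sum_comm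
    _ ≤ ∑ _v ∈ F, (1 + (#F - 1) * γ) := sum_le_sum hrow
    _ = #F + #F * (#F - 1) * γ := by rw [sum_const, nsmul_eq_mul]; ring

lemma card_le_of_inner_le_neg {F : Finset E} {β : ℝ} (hβ : 0 < β)
    (hunit : ∀ v ∈ F, ⟪v, v⟫ = 1) (hpair : ∀ v ∈ F, ∀ u ∈ F, v ≠ u → ⟪v, u⟫ ≤ -β) :
    (#F : ℝ) ≤ 1 + 1 / β := by
  have hgram := (real_inner_self_nonneg (x := ∑ v ∈ F, v)).trans (inner_sum_self_le hunit hpair)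
  rcases F.eq_empty_or_nonempty with rfl | hF
  · simp only [card_empty, Nat.cast_zero]; positivity
  have hn : (1 : ℝ) ≤ #F := by exact_mod_cast hF.card_pos
  have hβF : (#F - 1) * β ≤ 1 := by nlinarith
  rw [← sub_le_iff_le_add', le_div_iff₀ hβ]
  exact hβF

lemma card_mul_le_of_inner_le_neg {F : Finset E} {u : E} {β γ : ℝ} (hβ : 0 ≤ β) (hγ : 0 ≤ γ)
    (hu : ⟪u, u⟫ = 1) (hunit : ∀ v ∈ F, ⟪v, v⟫ = 1) (hneg : ∀ v ∈ F, ⟪v, u⟫ ≤ -β)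
    (hpair : ∀ v ∈ F, ∀ v' ∈ F, v ≠ v' → ⟪v, v'⟫ ≤ γ) :
    #F * (β ^ 2 - γ) ≤ 1 := by
  set n : ℝ := (#F : ℝ)
  set S := ∑ v ∈ F, v
  have hSS : ⟪S, S⟫ ≤ n + n * (n - 1) * γ := inner_sum_self_le hunit hpair
  have hSu : ⟪S, u⟫ ≤ -β * n := by
    calc ⟪S, u⟫ = ∑ v ∈ F, ⟪v, u⟫ := sum_inner _ _ _
      _ ≤ #F • (-β) := sum_le_card_nsmul _ _ _ hneg
      _ = -β * n := by rw [nsmul_eq_mul]; ring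
  -- expand `0 ≤ ‖S + nβ u‖²`
  have hsq : 0 ≤ ⟪S, S⟫ + 2 * (n * β) * ⟪S, u⟫ + (n * β) ^ 2 := by
    have hnonneg := real_inner_self_nonneg (x := S + (n * β) • u)
    rw [real_inner_add_add_self, real_inner_smul_left, real_inner_smul_right, real_inner_smul_right,
      hu] at hnonneg
    linarith
  have hnβ : 0 ≤ n * β := by positivity
  have hquad : n ^ 2 * (β ^ 2 - γ) ≤ n * (1 - γ) := by nlinarith [mul_le_mul_of_nonneg_left hSu hnβ]
  rcases F.eq_empty_or_nonempty with hF | hF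
  · simp [n, hF]
  have hn : 0 < n := Nat.cast_pos.2 hF.card_pos
  nlinarith

noncomputable def rescaledProjection (α : ℝ) (w v : E) : E := (√(1 - α ^ 2))⁻¹ • (v - α • w)

lemma rescaledProjection_injective {α : ℝ} (hα : α ^ 2 < 1) (w : E) :
    Function.Injective (rescaledProjection α w) := fun _ _ hxy ↦
  sub_left_injective <| smul_right_injective E (inv_pos.2 (Real.sqrt_pos.2 (sub_pos.2 hα))).ne' hxy

lemma inner_rescaledProjection {α : ℝ} (hα : α ^ 2 < 1) {w x y : E} (hw : ⟪w, w⟫ = 1)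
    (hx : ⟪x, w⟫ = α) (hy : ⟪y, w⟫ = α) :
    ⟪rescaledProjection α w x, rescaledProjection α w y⟫ = (⟪x, y⟫ - α ^ 2) / (1 - α ^ 2) := by
  have hpos : 0 < 1 - α ^ 2 := sub_pos.2 hα
  rw [real_inner_comm] at hy
  simp only [rescaledProjection, real_inner_smul_left, real_inner_smul_right, inner_sub_left,
    inner_sub_right, hx, hy, hw]
  have hc : (√(1 - α ^ 2))⁻¹ ^ 2 = (1 - α ^ 2)⁻¹ := by rw [inv_pow, Real.sq_sqrt hpos.le]
  rw [div_eq_mul_inv, ← hc]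
  ring

lemma inner_rescaledProjection_self {α : ℝ} (hα : α ^ 2 < 1) {w x : E} (hw : ⟪w, w⟫ = 1)
    (hx : ⟪x, w⟫ = α) (hxx : ⟪x, x⟫ = 1) :
    ⟪rescaledProjection α w x, rescaledProjection α w x⟫ = 1 := by
  rw [inner_rescaledProjection hα hw hx hx, hxx, div_self (sub_pos.2 hα).ne']

lemma inner_rescaledProjection_le {α : ℝ} (hα : α ^ 2 < 1) {w x y : E} (hw : ⟪w, w⟫ = 1)
    (hx : ⟪x, w⟫ = α) (hy : ⟪y, w⟫ = α) (hxy : ⟪x, y⟫ ≤ α) :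
    ⟪rescaledProjection α w x, rescaledProjection α w y⟫ ≤ α / (1 + α) := by
  have h1α : 0 < 1 + α := by nlinarith
  rw [inner_rescaledProjection hα hw hx hy, div_le_div_iff₀ (sub_pos.2 hα) h1α]
  nlinarith [mul_le_mul_of_nonneg_left hxy h1α.le]

lemma inner_rescaledProjection_eq {α : ℝ} (hα : α ^ 2 < 1) {w x y : E} (hw : ⟪w, w⟫ = 1)
    (hx : ⟪x, w⟫ = α) (hy : ⟪y, w⟫ = α) (hxy : ⟪x, y⟫ = α) :
    ⟪rescaledProjection α w x, rescaledProjection α w y⟫ = α / (1 + α) := by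
  have h1α : 1 + α ≠ 0 := fun h ↦ by nlinarith
  rw [inner_rescaledProjection hα hw hx hy, hxy, div_eq_div_iff (sub_pos.2 hα).ne' h1α]
  ring

lemma inner_rescaledProjection_le_neg {α β : ℝ} (hα : α ^ 2 < 1) (hβ : 0 ≤ β) {w x y : E}
    (hw : ⟪w, w⟫ = 1) (hx : ⟪x, w⟫ = α) (hy : ⟪y, w⟫ = α) (hxy : ⟪x, y⟫ ≤ -β) :
    ⟪rescaledProjection α w x, rescaledProjection α w y⟫ ≤ -β := by
  rw [inner_rescaledProjection hα hw hx hy, div_le_iff₀ (sub_pos.2 hα)]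
  nlinarith

-- The configuration of the projection argument: `B` stands for the vertices of `U \ I` with at
-- least `m` non-neighbours in the maximum independent set `I`.
structure ObtuseAttachment (α β : ℝ) (m : ℕ) (I B : Finset E) : Prop where
  unit_left : ∀ v ∈ I, ⟪v, v⟫ = 1
  unit_right : ∀ v ∈ B, ⟪v, v⟫ = 1
  inner_left : ∀ v ∈ I, ∀ w ∈ I, v ≠ w → ⟪v, w⟫ = α
  inner_right : ∀ v ∈ B, ∀ w ∈ B, v ≠ w → ⟪v, w⟫ ≤ α
  inner_right_left : ∀ v ∈ B, ∀ w ∈ I, ⟪v, w⟫ = α ∨ ⟪v, w⟫ ≤ -β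
  exists_inner_le : ∀ v ∈ B, ∃ w ∈ I, ⟪v, w⟫ ≤ -β
  le_card_filter : ∀ v ∈ B, m ≤ #(I.filter (⟪v, ·⟫ = α))

namespace ObtuseAttachment

variable {α β : ℝ} {m : ℕ} {I B : Finset E}

theorem card_le_of_le_half_sq (h : ObtuseAttachment α β m I B) (hα : 0 ≤ α) (hβ : 0 < β)
    (hαβ : α ≤ β ^ 2 / 2) : (#B : ℝ) ≤ 2 / β ^ 2 * #I := by
  have hβ2 : 0 < β ^ 2 := by positivity
  have hdouble := card_nsmul_le_card_nsmul (R := ℝ) (s := B) (t := I) (m := 1) (n := 2 / β ^ 2)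
    (fun v w ↦ ⟪v, w⟫ ≤ -β) ?_ ?_
  · simpa [mul_comm] using hdouble
  · intro v hv
    obtain ⟨w, hw, hvw⟩ := h.exists_inner_le v hv
    exact_mod_cast card_pos.2 ⟨w, mem_filter.2 ⟨hw, hvw⟩⟩
  · intro w hw
    have hdeg := card_mul_le_of_inner_le_neg (F := B.bipartiteBelow (fun v w ↦ ⟪v, w⟫ ≤ -β) w)
      hβ.le hα (h.unit_left w hw) (fun v hv ↦ h.unit_right v (mem_filter.1 hv).1)
      (fun v hv ↦ (mem_filter.1 hv).2)
      (fun v hv v' hv' ↦ h.inner_right v (mem_filter.1 hv).1 v' (mem_filter.1 hv').1)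
    rw [le_div_iff₀ hβ2]
    nlinarith

theorem project [DecidableEq E] (h : ObtuseAttachment α β (m + 1) I B) (hα0 : 0 < α)
    (hα1 : α < 1) (hβ : 0 < β) {w : E} (hw : w ∈ I) :
    ObtuseAttachment (α / (1 + α)) β m ((I.erase w).image (rescaledProjection α w))
      ((B.filter (⟪·, w⟫ = α)).image (rescaledProjection α w)) := by
  set f := rescaledProjection α w
  have hα2 : α ^ 2 < 1 := by nlinarith
  have hww := h.unit_left w hw
  have hI : ∀ x ∈ I.erase w, ⟪x, w⟫ = α := fun x hx ↦
    h.inner_left x (mem_of_mem_erase hx) w hw (ne_of_mem_erase hx)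
  have hB : ∀ x ∈ B.filter (⟪·, w⟫ = α), ⟪x, w⟫ = α := fun x hx ↦ (mem_filter.1 hx).2
  refine ⟨?_, ?_, ?_, ?_, ?_, ?_, ?_⟩ <;> simp only [forall_mem_image]
  · exact fun x hx ↦ inner_rescaledProjection_self hα2 hww (hI x hx)
      (h.unit_left x (mem_of_mem_erase hx))
  · exact fun x hx ↦ inner_rescaledProjection_self hα2 hww (hB x hx)
      (h.unit_right x (mem_filter.1 hx).1)
  · exact fun x hx y hy hxy ↦ inner_rescaledProjection_eq hα2 hww (hI x hx) (hI y hy)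
      (h.inner_left x (mem_of_mem_erase hx) y (mem_of_mem_erase hy) (ne_of_apply_ne f hxy))
  · exact fun x hx y hy hxy ↦ inner_rescaledProjection_le hα2 hww (hB x hx) (hB y hy)
      (h.inner_right x (mem_filter.1 hx).1 y (mem_filter.1 hy).1 (ne_of_apply_ne f hxy))
  · intro x hx y hy
    rcases h.inner_right_left x (mem_filter.1 hx).1 y (mem_of_mem_erase hy) with hxy | hxy
    · exact Or.inl (inner_rescaledProjection_eq hα2 hww (hB x hx) (hI y hy) hxy)
    · exact Or.inr (inner_rescaledProjection_le_neg hα2 hβ.le hww (hB x hx) (hI y hy) hxy)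
  · intro x hx
    obtain ⟨y, hy, hxy⟩ := h.exists_inner_le x (mem_filter.1 hx).1
    have hyw : y ∈ I.erase w := mem_erase.2 ⟨by rintro rfl; linarith [hB x hx], hy⟩
    exact ⟨f y, mem_image_of_mem f hyw,
      inner_rescaledProjection_le_neg hα2 hβ.le hww (hB x hx) (hI y hyw) hxy⟩
  · intro x hx
    rw [filter_image, card_image_of_injective _ (rescaledProjection_injective hα2 w)]
    calc m ≤ #((I.filter (⟪x, ·⟫ = α)).erase w) := by
          have hcount := h.le_card_filter x (mem_filter.1 hx).1
          have herase := pred_card_le_card_erase (s := I.filter (⟪x, ·⟫ = α)) (a := w)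
          omega
      _ = #((I.erase w).filter (⟪x, ·⟫ = α)) := by rw [filter_erase]
      _ ≤ _ := card_le_card <| monotone_filter_right _ fun y hy hxy ↦
          inner_rescaledProjection_eq hα2 hww (hB x hx) (hI y hy) hxy

theorem card_le {ρ : ℝ} (h : ObtuseAttachment α β m I B) (hα0 : 0 < α) (hα1 : α < 1)
    (hβ : 0 < β) (hρ : 0 ≤ ρ) {k : ℕ} (hk : 2 / β ^ 2 ≤ k + 1 / α) (hI : (#I : ℝ) ≤ ρ * (m - k)) :
    (#B : ℝ) ≤ ρ ^ k * (2 / β ^ 2) * #I := by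
  induction k generalizing α m I B with
  | zero =>
    have hαβ : α ≤ β ^ 2 / 2 := by
      rw [Nat.cast_zero, zero_add, div_le_div_iff₀ (by positivity) hα0] at hk
      linarith
    simpa using h.card_le_of_le_half_sq hα0.le hβ hαβ
  | succ k ih =>
    rcases B.eq_empty_or_nonempty with rfl | ⟨v, hv⟩
    · simp only [card_empty, Nat.cast_zero]; positivity
    obtain ⟨w₀, hw₀, -⟩ := h.exists_inner_le v hv
    have hIne : I.Nonempty := ⟨w₀, hw₀⟩
    have hI1 : (1 : ℝ) ≤ #I := by exact_mod_cast hIne.card_pos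
    obtain ⟨m, rfl⟩ : ∃ m', m = m' + 1 := by
      refine ⟨m - 1, (Nat.succ_pred_eq_of_pos ?_).symm⟩
      have hm : (0 : ℝ) < m := by nlinarith [(k.cast_nonneg : (0 : ℝ) ≤ k)]
      exact_mod_cast hm
    push_cast at hk hI
    obtain ⟨w, hw, hcount⟩ := exists_mul_card_le_mul_card_bipartiteBelow hIne h.le_card_filter
    set Bw := B.filter (⟪·, w⟫ = α)
    have hinj := rescaledProjection_injective (by nlinarith : α ^ 2 < 1) w
    have hcardI : (#((I.erase w).image (rescaledProjection α w)) : ℝ) = #I - 1 := by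
      rw [card_image_of_injective _ hinj, ← card_erase_add_one hw]
      push_cast; ring
    have hIH : (#Bw : ℝ) ≤ ρ ^ k * (2 / β ^ 2) * (#I - 1) := by
      have hα' : 1 / (α / (1 + α)) = 1 / α + 1 := by field_simp
      have hproj := ih (h.project hα0 hα1 hβ hw) (by positivity)
        ((div_lt_one (by linarith)).2 (by linarith)) (by linarith) (by rw [hcardI]; linarith)
      rwa [card_image_of_injective _ hinj, hcardI] at hproj
    have hBw : (#B : ℝ) ≤ ρ * #Bw := by
      have hcountR : ((m : ℝ) + 1) * #B ≤ #I * #Bw := by exact_mod_cast hcount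
      have hIm : (#I : ℝ) ≤ ρ * (m + 1) := by nlinarith [(k.cast_nonneg : (0 : ℝ) ≤ k)]
      refine le_of_mul_le_mul_left (hcountR.trans ?_) (by positivity : (0 : ℝ) < m + 1)
      nlinarith [(#Bw).cast_nonneg (α := ℝ)]
    have hcoef : 0 ≤ ρ ^ (k + 1) * (2 / β ^ 2) := by positivity
    calc (#B : ℝ) ≤ ρ * (ρ ^ k * (2 / β ^ 2) * (#I - 1)) :=
          hBw.trans (mul_le_mul_of_nonneg_left hIH hρ)
      _ ≤ ρ ^ (k + 1) * (2 / β ^ 2) * #I := by linear_combination hcoef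

end ObtuseAttachment

theorem card_lt_two_pow_of_forall_indep_card_le {β : ℝ} {U I : Finset E} (hβ : 0 < β)
    (hunit : ∀ v ∈ U, ‖v‖ = 1)
    (hmax : ∀ J ⊆ U, (∀ v ∈ J, ∀ w ∈ J, v ≠ w → ⟪v, w⟫ ∉ Set.Icc (-1 : ℝ) (-β)) → #J ≤ #I) :
    #U < 2 ^ (⌊1 + 1 / β⌋₊ + #I) := by
  set G := SimpleGraph.fromRel fun v w : E ↦ ⟪v, w⟫ ∈ Set.Icc (-1 : ℝ) (-β)
  refine (G.card_lt_choose_of_forall_isClique_card_le _ _ U ?_ ?_).trans_le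
    (Nat.choose_le_two_pow _ _)
  · intro C hCU hC
    refine Nat.le_floor (card_le_of_inner_le_neg hβ (fun v hv ↦ ?_) fun v hv w hw hvw ↦ ?_)
    · rw [real_inner_self_eq_norm_sq, hunit v (hCU hv), one_pow]
    · obtain ⟨-, h | h⟩ := (SimpleGraph.fromRel_adj _ _ _).1 (hC hv hw hvw)
      · exact h.2
      · exact real_inner_comm v w ▸ h.2
  · intro C hCU hC
    refine hmax C hCU fun v hv w hw hvw h ↦ ?_
    exact ((SimpleGraph.compl_adj _ _ _).1 (hC hv hw hvw)).2
      ((SimpleGraph.fromRel_adj _ _ _).2 ⟨hvw, Or.inl h⟩)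

structure IsMaxIndepInCode (α β : ℝ) (U I : Finset E) : Prop where
  norm_eq_one : ∀ v ∈ U, ‖v‖ = 1
  inner_mem : ∀ v ∈ U, ∀ w ∈ U, v ≠ w → ⟪v, w⟫ ∈ Set.Icc (-1 : ℝ) (-β) ∪ {α}
  subset : I ⊆ U
  indep : ∀ v ∈ I, ∀ w ∈ I, v ≠ w → ⟪v, w⟫ ∉ Set.Icc (-1 : ℝ) (-β)
  card_le : ∀ J ⊆ U, (∀ v ∈ J, ∀ w ∈ J, v ≠ w → ⟪v, w⟫ ∉ Set.Icc (-1 : ℝ) (-β)) → #J ≤ #I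

-- `⌈2 / β²⌉` projection steps bring `α` down to `β² / 2`; below the threshold
-- `|I| < 2 ⌈2 / β²⌉ / δ` the Ramsey bound applies instead.
noncomputable def attachmentConstant (β δ : ℝ) : ℝ :=
  (2 / δ) ^ ⌈2 / β ^ 2⌉₊ * (2 / β ^ 2) + 2 ^ (⌊1 + 1 / β⌋₊ + ⌈2 * (⌈2 / β ^ 2⌉₊ : ℝ) / δ⌉₊)

section SphericalCode

variable [DecidableEq E] {α β δ : ℝ} {U I : Finset E}

noncomputable def weaklyAttached (β δ : ℝ) (U I : Finset E) : Finset E :=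
  (U \ I).filter fun v ↦ ¬(1 - δ) * #I ≤ #(I.filter (⟪v, ·⟫ ∈ Set.Icc (-1 : ℝ) (-β)))

namespace IsMaxIndepInCode

theorem obtuseAttachment (h : IsMaxIndepInCode α β U I) (hα : 0 < α) (hβ : 0 < β) (m : ℕ) :
    ObtuseAttachment α β m I
      ((U \ I).filter fun v ↦ m + #(I.filter (⟪v, ·⟫ ∈ Set.Icc (-1 : ℝ) (-β))) ≤ #I) := by
  have hU : ∀ v ∈ U, ⟪v, v⟫ = 1 := fun v hv ↦ by
    rw [real_inner_self_eq_norm_sq, h.norm_eq_one v hv, one_pow]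
  have hα_notMem : α ∉ Set.Icc (-1 : ℝ) (-β) := fun hα' ↦ by linarith [hα'.2]
  have h_eq_α : ∀ v ∈ U, ∀ w ∈ U, v ≠ w → ⟪v, w⟫ ∉ Set.Icc (-1 : ℝ) (-β) → ⟪v, w⟫ = α :=
    fun v hv w hw hvw ↦ (h.inner_mem v hv w hw hvw).resolve_left
  have hB : ∀ v ∈ (U \ I).filter fun v ↦ m + #(I.filter (⟪v, ·⟫ ∈ Set.Icc (-1 : ℝ) (-β))) ≤ #I,
      v ∈ U ∧ ∀ w ∈ I, v ≠ w := fun v hv ↦ by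
    obtain ⟨hvU, hvI⟩ := mem_sdiff.1 (mem_filter.1 hv).1
    exact ⟨hvU, fun w hw hvw ↦ hvI (hvw ▸ hw)⟩
  refine ⟨fun v hv ↦ hU v (h.subset hv), fun v hv ↦ hU v (hB v hv).1, fun v hv w hw hvw ↦
    h_eq_α v (h.subset hv) w (h.subset hw) hvw (h.indep v hv w hw hvw), ?_, ?_, ?_, ?_⟩
  · intro v hv w hw hvw
    rcases h.inner_mem v (hB v hv).1 w (hB w hw).1 hvw with hvw' | hvw'
    · linarith [hvw'.2]
    · exact hvw'.le
  · intro v hv w hw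
    rcases h.inner_mem v (hB v hv).1 w (h.subset hw) ((hB v hv).2 w hw) with hvw | hvw
    · exact Or.inr hvw.2
    · exact Or.inl hvw
  · intro v hv
    obtain ⟨w, hw, hvw⟩ := exists_rel_of_forall_card_le
      (r := fun v w ↦ ⟪v, w⟫ ∈ Set.Icc (-1 : ℝ) (-β))
      (fun v w hvw ↦ by simpa only [real_inner_comm] using hvw) h.subset h.indep h.card_le
      (mem_filter.1 hv).1
    exact ⟨w, hw, hvw.2⟩
  · intro v hv
    have hsplit := card_filter_add_card_filter_not (s := I)
      (fun w ↦ ⟪v, w⟫ ∈ Set.Icc (-1 : ℝ) (-β))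
    have hα_iff : I.filter (⟪v, ·⟫ = α) = I.filter fun w ↦ ⟪v, w⟫ ∉ Set.Icc (-1 : ℝ) (-β) :=
      filter_congr fun w hw ↦
        ⟨fun hvw ↦ hvw ▸ hα_notMem, h_eq_α v (hB v hv).1 w (h.subset hw) ((hB v hv).2 w hw)⟩
    have hm := (mem_filter.1 hv).2
    rw [hα_iff]
    omega

theorem card_weaklyAttached_le_of_le_mul (h : IsMaxIndepInCode α β U I) (hα0 : 0 < α)
    (hα1 : α < 1) (hβ : 0 < β) (hδ : 0 < δ) (hlarge : 2 * (⌈2 / β ^ 2⌉₊ : ℝ) ≤ δ * #I) :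
    (#(weaklyAttached β δ U I) : ℝ) ≤ (2 / δ) ^ ⌈2 / β ^ 2⌉₊ * (2 / β ^ 2) * #I := by
  set m := ⌊δ * #I⌋₊ + 1
  have hm : δ * #I < m := by simpa [m] using Nat.lt_floor_add_one (δ * #I)
  have hsub : weaklyAttached β δ U I
      ⊆ (U \ I).filter fun v ↦ m + #(I.filter (⟪v, ·⟫ ∈ Set.Icc (-1 : ℝ) (-β))) ≤ #I := by
    refine monotone_filter_right _ fun v _ hv ↦ ?_
    have hfloor : (⌊δ * #I⌋₊ : ℝ) ≤ δ * #I := Nat.floor_le (by positivity)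
    have hreal : (⌊δ * #I⌋₊ : ℝ) + #(I.filter (⟪v, ·⟫ ∈ Set.Icc (-1 : ℝ) (-β))) < #I := by
      rw [not_le] at hv
      linarith
    have hnat : ⌊δ * #I⌋₊ + #(I.filter (⟪v, ·⟫ ∈ Set.Icc (-1 : ℝ) (-β))) < #I := by
      exact_mod_cast hreal
    omega
  have hk : 2 / β ^ 2 ≤ ⌈2 / β ^ 2⌉₊ + 1 / α := by
    linarith [Nat.le_ceil (2 / β ^ 2), one_div_pos.2 hα0]
  have hIm : (#I : ℝ) ≤ 2 / δ * (m - ⌈2 / β ^ 2⌉₊) := by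
    rw [div_mul_eq_mul_div, le_div_iff₀ hδ]
    linarith
  calc _ ≤ (#((U \ I).filter fun v ↦ m + #(I.filter (⟪v, ·⟫ ∈ Set.Icc (-1 : ℝ) (-β))) ≤ #I) : ℝ) :=
        by exact_mod_cast card_le_card hsub
    _ ≤ _ := (h.obtuseAttachment hα0 hβ m).card_le hα0 hα1 hβ (by positivity) hk hIm

theorem card_weaklyAttached_le (h : IsMaxIndepInCode α β U I) (hα0 : 0 < α) (hα1 : α < 1)
    (hβ : 0 < β) (hδ : 0 < δ) :
    (#(weaklyAttached β δ U I) : ℝ) ≤ attachmentConstant β δ * #I := by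
  have hproj : 0 ≤ (2 / δ) ^ ⌈2 / β ^ 2⌉₊ * (2 / β ^ 2) := by positivity
  have hramsey : (0 : ℝ) ≤ 2 ^ (⌊1 + 1 / β⌋₊ + ⌈2 * (⌈2 / β ^ 2⌉₊ : ℝ) / δ⌉₊) := by positivity
  by_cases hlarge : 2 * (⌈2 / β ^ 2⌉₊ : ℝ) ≤ δ * #I
  · refine (h.card_weaklyAttached_le_of_le_mul hα0 hα1 hβ hδ hlarge).trans ?_
    unfold attachmentConstant
    gcongr
    linarith
  rcases I.eq_empty_or_nonempty with rfl | hIne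
  · simp [weaklyAttached]
  have hsmall : #I ≤ ⌈2 * (⌈2 / β ^ 2⌉₊ : ℝ) / δ⌉₊ := by
    refine Nat.cast_le.1 (le_trans ?_ (Nat.le_ceil _))
    rw [le_div_iff₀ hδ]
    linarith
  have hU : #U ≤ 2 ^ (⌊1 + 1 / β⌋₊ + ⌈2 * (⌈2 / β ^ 2⌉₊ : ℝ) / δ⌉₊) :=
    (card_lt_two_pow_of_forall_indep_card_le hβ h.norm_eq_one h.card_le).le.trans
      (Nat.pow_le_pow_right two_pos (by omega))
  have hI1 : (1 : ℝ) ≤ #I := by exact_mod_cast hIne.card_pos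
  calc _ ≤ (#U : ℝ) := by exact_mod_cast card_le_card ((filter_subset _ _).trans sdiff_subset)
    _ ≤ 2 ^ (⌊1 + 1 / β⌋₊ + ⌈2 * (⌈2 / β ^ 2⌉₊ : ℝ) / δ⌉₊) := by exact_mod_cast hU
    _ ≤ attachmentConstant β δ * 1 := by unfold attachmentConstant; linarith
    _ ≤ attachmentConstant β δ * #I := by
        gcongr
        unfold attachmentConstant
        positivity

theorem exists_subset_sdiff (h : IsMaxIndepInCode α β U I) (hα0 : 0 < α) (hα1 : α < 1)
    (hβ : 0 < β) (hδ : 0 < δ) :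
    ∃ U' ⊆ U \ I, (#U : ℝ) - (attachmentConstant β δ + 1) * #I ≤ #U' ∧
      ∀ v ∈ U', (1 - δ) * #I ≤ #(I.filter (⟪v, ·⟫ ∈ Set.Icc (-1 : ℝ) (-β))) := by
  refine ⟨_, filter_subset _ _, ?_, fun v hv ↦ (mem_filter.1 hv).2⟩
  have hbad := h.card_weaklyAttached_le hα0 hα1 hβ hδ
  have hsplit := card_filter_add_card_filter_not (s := U \ I)
    fun v ↦ (1 - δ) * #I ≤ #(I.filter (⟪v, ·⟫ ∈ Set.Icc (-1 : ℝ) (-β)))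
  rw [weaklyAttached] at hbad
  rw [← card_sdiff_add_card_eq_card h.subset, ← hsplit]
  push_cast
  linarith

end IsMaxIndepInCode

end SphericalCode

theorem independent_set_attachment_general (β δ : ℝ) (hβ0 : 0 < β) (hδ : 0 < δ) :
    ∃ M : ℝ, ∀ α : ℝ, 0 < α → α < 1 → ∀ d : ℕ,
      ∀ P : Finset (EuclideanSpace ℝ (Fin d)),
        (∀ v ∈ P, ‖v‖ = 1) →
        (∀ v ∈ P, ∀ w ∈ P, v ≠ w → ⟪v, w⟫ ∈ Set.Icc (-1 : ℝ) (-β) ∪ {α}) →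
        ∀ U ⊆ P, ∀ I ⊆ U,
          (∀ v ∈ I, ∀ w ∈ I, v ≠ w → ⟪v, w⟫ ∉ Set.Icc (-1 : ℝ) (-β)) →
          (∀ J ⊆ U, (∀ v ∈ J, ∀ w ∈ J, v ≠ w → ⟪v, w⟫ ∉ Set.Icc (-1 : ℝ) (-β)) →
            J.card ≤ I.card) →
          ∃ U' ⊆ U \ I,
            (U.card : ℝ) - M * I.card ≤ U'.card ∧
            ∀ v ∈ U',
              (1 - δ) * I.card ≤
                ((I.filter fun w => ⟪v, w⟫ ∈ Set.Icc (-1 : ℝ) (-β)).card : ℝ) := by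
  refine ⟨attachmentConstant β δ + 1, fun α hα0 hα1 d P hunit hcode U hUP I hIU hI hmax ↦ ?_⟩
  have hcode_U : IsMaxIndepInCode α β U I :=
    ⟨fun v hv ↦ hunit v (hUP hv), fun v hv w hw ↦ hcode v (hUP hv) w (hUP hw), hIU, hI, hmax⟩
  exact hcode_U.exists_subset_sdiff hα0 hα1 hβ0 hδ

/-- **Lemma 7 (combinatorial lemma).** Let `0 < β ≤ 1` and `δ > 0`. There is a constant
`M = M(β,δ)` such that for every `0 < α < 1`, every dimension `d` and every
`[-1,-β] ∪ {α}`-spherical code `P` in `ℝ^d`, with the graph `G` on `P` joining `v, v'`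
when `⟪v, v'⟫ ∈ [-1,-β]`: for every `U ⊆ P`, if `I` is a maximum-size independent set in
the induced subgraph `G[U]`, then some `U' ⊆ U \ I` with `|U'| ≥ |U| − M·|I|` has all of
its vertices adjacent to at least `(1−δ)·|I|` vertices of `I`. -/
theorem independent_set_attachment (β δ : ℝ) (hβ0 : 0 < β) (hβ1 : β ≤ 1) (hδ : 0 < δ) :
    ∃ M : ℝ, ∀ α : ℝ, 0 < α → α < 1 → ∀ d : ℕ,
      ∀ P : Finset (EuclideanSpace ℝ (Fin d)),
        (∀ v ∈ P, ‖v‖ = 1) →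
        (∀ v ∈ P, ∀ w ∈ P, v ≠ w → ⟪v, w⟫ ∈ Set.Icc (-1 : ℝ) (-β) ∪ {α}) →
        ∀ U ⊆ P, ∀ I ⊆ U,
          (∀ v ∈ I, ∀ w ∈ I, v ≠ w → ⟪v, w⟫ ∉ Set.Icc (-1 : ℝ) (-β)) →
          (∀ J ⊆ U, (∀ v ∈ J, ∀ w ∈ J, v ≠ w → ⟪v, w⟫ ∉ Set.Icc (-1 : ℝ) (-β)) →
            J.card ≤ I.card) →
          ∃ U' ⊆ U \ I,
            (U.card : ℝ) - M * I.card ≤ U'.card ∧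
            ∀ v ∈ U',
              (1 - δ) * I.card ≤
                ((I.filter fun w => ⟪v, w⟫ ∈ Set.Icc (-1 : ℝ) (-β)).card : ℝ) :=
  independent_set_attachment_general β δ hβ0 hδ
end

section
/- Let G be a graph, let B ≥ 1 be an integer, and let δ > 0 satisfy (B+1)B/2 · δ < 1. Let I_0, I_1, …, I_B be nonempty, pairwise disjoint finite sets of vertices of G such that for all 0 ≤ r < s ≤ B, every vertex of I_s is adjacent to at least (1 − δ)·|I_r| vertices of I_r. Then there exist vertices v_0 ∈ I_0, v_1 ∈ I_1, …, v_B ∈ I_B that are pairwise adjacent, i.e., G contains a clique of size B + 1. -/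
open scoped Classical

/-! Choose the vertices from the top set down: having picked a clique `v_{r+1}, …, v_B`, each
`v_s` misses at most `δ·|I_r|` vertices of `I_r`, so as long as `(B - r)·δ < 1` some vertex of
`I_r` is adjacent to all of them. -/

open Finset

theorem exists_mem_forall_of_card_filter_not_le {α ι : Type*} {A : Finset α} (hA : A.Nonempty)
    (s : Finset ι) (P : ι → α → Prop) {δ : ℝ}
    (hP : ∀ i ∈ s, (#(A.filter fun a => ¬ P i a) : ℝ) ≤ δ * #A) (hs : #s * δ < 1) :
    ∃ a ∈ A, ∀ i ∈ s, P i a := by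
  by_contra! h
  have hcover : A ⊆ s.biUnion fun i => A.filter fun a => ¬ P i a := by
    intro a ha
    obtain ⟨i, hi, hPa⟩ := h a ha
    exact mem_biUnion.2 ⟨i, hi, mem_filter.2 ⟨ha, hPa⟩⟩
  have hA_pos : (0 : ℝ) < #A := by exact_mod_cast hA.card_pos
  have : (#A : ℝ) ≤ #s * δ * #A :=
    calc (#A : ℝ) ≤ ∑ i ∈ s, (#(A.filter fun a => ¬ P i a) : ℝ) := by
          exact_mod_cast (card_le_card hcover).trans card_biUnion_le
      _ ≤ ∑ _i ∈ s, δ * #A := sum_le_sum hP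
      _ = #s * δ * #A := by rw [sum_const, nsmul_eq_mul, mul_assoc]
  nlinarith

namespace SimpleGraph

variable {V : Type*} (G : SimpleGraph V)

theorem exists_forall_adj_of_card_filter_adj_ge {ι : Type*} [Fintype ι] {A : Finset V}
    (hA : A.Nonempty) (u : ι → V) {δ : ℝ}
    (hdense : ∀ i, (1 - δ) * #A ≤ (#(A.filter fun w => G.Adj (u i) w) : ℝ))
    (hδ : Fintype.card ι * δ < 1) :
    ∃ a ∈ A, ∀ i, G.Adj (u i) a := by
  have hmiss (i : ι) : (#(A.filter fun w => ¬ G.Adj (u i) w) : ℝ) ≤ δ * #A := by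
    have hsplit : (#(A.filter fun w => G.Adj (u i) w) : ℝ)
        + #(A.filter fun w => ¬ G.Adj (u i) w) = #A := by
      exact_mod_cast card_filter_add_card_filter_not _
    linarith [hdense i]
  obtain ⟨a, ha, hadj⟩ := exists_mem_forall_of_card_filter_not_le hA univ
    (fun i a => G.Adj (u i) a) (fun i _ => hmiss i) (by rwa [card_univ])
  exact ⟨a, ha, fun i => hadj i (mem_univ i)⟩

theorem exists_pairwise_adj_of_card_filter_adj_ge {n : ℕ} (I : Fin (n + 1) → Finset V) {δ : ℝ}
    (hδ : n * δ < 1) (hne : ∀ i, (I i).Nonempty)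
    (hdense : ∀ r s : Fin (n + 1), r < s → ∀ v ∈ I s,
      (1 - δ) * #(I r) ≤ (#((I r).filter fun w => G.Adj v w) : ℝ)) :
    ∃ v : Fin (n + 1) → V, (∀ i, v i ∈ I i) ∧ Pairwise fun i j => G.Adj (v i) (v j) := by
  induction n with
  | zero =>
    obtain ⟨a, ha⟩ := hne 0
    exact ⟨fun _ => a, fun i => Fin.fin_one_eq_zero i ▸ ha,
      fun i j hij => absurd (Fin.ext (by omega)) hij⟩
  | succ n ih =>
    have hδ' : (n : ℝ) * δ < 1 := by
      push_cast at hδ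
      rcases le_or_gt 0 δ with h | h <;> nlinarith
    obtain ⟨v, hvI, hv⟩ := ih (fun i => I i.succ) hδ' (fun i => hne i.succ)
      fun r s hrs => hdense r.succ s.succ (Fin.succ_lt_succ_iff.2 hrs)
    obtain ⟨a, haI, ha⟩ := G.exists_forall_adj_of_card_filter_adj_ge (hne 0) v
      (fun i => hdense 0 i.succ i.succ_pos (v i) (hvI i)) (by simpa using hδ)
    refine ⟨Fin.cons a v, Fin.cases haI hvI, ?_⟩
    intro i j hij
    cases i using Fin.cases <;> cases j using Fin.cases
    · exact absurd rfl hij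
    · exact (ha _).symm
    · exact ha _
    · exact hv (fun h => hij (congrArg Fin.succ h))

end SimpleGraph

theorem clique_from_dense_sets_general {V : Type*} (G : SimpleGraph V) (B : ℕ)
    (δ : ℝ) (hδB : ((B + 1) * B / 2 : ℝ) * δ < 1)
    (I : Fin (B + 1) → Finset V)
    (hne : ∀ i, (I i).Nonempty)
    (hdense : ∀ r s : Fin (B + 1), r < s → ∀ v ∈ I s,
      (1 - δ) * (I r).card ≤ (((I r).filter fun w => G.Adj v w).card : ℝ)) :
    ∃ v : Fin (B + 1) → V, (∀ i, v i ∈ I i) ∧ ∀ i j, i ≠ j → G.Adj (v i) (v j) := by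
  have hBδ : (B : ℝ) * δ < 1 := by
    rcases Nat.eq_zero_or_pos B with rfl | hB
    · simp
    have hB' : (1 : ℝ) ≤ B := by exact_mod_cast hB
    rcases le_or_gt 0 δ with hδ | hδ <;> nlinarith
  exact G.exists_pairwise_adj_of_card_filter_adj_ge I hBδ hne hdense

/-- **Clique from dense independent sets.** Let `G` be a simple graph, `B ≥ 1` an integer
and `δ > 0` with `(B+1)B/2 · δ < 1`. If `I_0, …, I_B` are nonempty pairwise disjoint
finite sets of vertices such that for all `r < s` every vertex of `I_s` is adjacent to at
least `(1−δ)·|I_r|` vertices of `I_r`, then one can pick `v_i ∈ I_i` forming a clique of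
size `B + 1`. -/
theorem clique_from_dense_sets {V : Type*} (G : SimpleGraph V) (B : ℕ) (hB : 1 ≤ B)
    (δ : ℝ) (hδ : 0 < δ) (hδB : ((B + 1) * B / 2 : ℝ) * δ < 1)
    (I : Fin (B + 1) → Finset V)
    (hne : ∀ i, (I i).Nonempty)
    (hdisj : ∀ i j, i ≠ j → Disjoint (I i) (I j))
    (hdense : ∀ r s : Fin (B + 1), r < s → ∀ v ∈ I s,
      (1 - δ) * (I r).card ≤ (((I r).filter fun w => G.Adj v w).card : ℝ)) :
    ∃ v : Fin (B + 1) → V, (∀ i, v i ∈ I i) ∧ ∀ i j, i ≠ j → G.Adj (v i) (v j) :=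
  clique_from_dense_sets_general G B δ hδB I hne hdense
end

section
/- Let r ≥ 2 and t ≥ 1 be integers and let 0 < τ ≤ 1. Then there exists a set of rt unit vectors in R^{(r−1)t+1} such that the inner product of any two distinct vectors in the set belongs to {−(1−τ)/(r−1+τ), τ/(r−1+τ)}. Consequently, for L = {−(1−τ)/(r−1+τ), τ/(r−1+τ)}, the maximum size N_L(d) of an L-spherical code in R^d satisfies N_L(d) ≥ (r/(r−1))·d + O(1) as d → ∞. -/
/-!
Take `t` mutually orthogonal copies of a regular simplex with `r` vertices, scaled by `γ`, and
add to every vertex the same component `α` along one further orthogonal direction. The inner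
products are `γ² (1 - 1/r) + α²` on the diagonal, `-γ²/r + α²` inside a copy and `α²` across
copies, so `γ² = r/(r-1+τ)` and `α² = τ/(r-1+τ)` give `1`, `-(1-τ)/(r-1+τ)` and `τ/(r-1+τ)`.
Each simplex spans only `r - 1` dimensions, so the configuration spans at most `(r-1)t + 1`
dimensions and embeds isometrically in every `ℝ^d` with `d ≥ (r-1)t + 1`; the choice
`t = ⌊(d-1)/(r-1)⌋` gives the linear lower bound.
-/
open scoped RealInnerProductSpace
open Module Submodule Finset

section
variable {E : Type*} [NormedAddCommGroup E] [InnerProductSpace ℝ E]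

def IsSphericalCode_s15 (L : Set ℝ) (P : Finset E) : Prop :=
  (∀ v ∈ P, ‖v‖ = 1) ∧ ∀ v ∈ P, ∀ w ∈ P, v ≠ w → ⟪v, w⟫ ∈ L

theorem isSphericalCode_image {ι : Type*} [Fintype ι] [DecidableEq E] {L : Set ℝ} {v : ι → E}
    (hv : ∀ x, ⟪v x, v x⟫ = 1) (hL : ∀ x y, x ≠ y → ⟪v x, v y⟫ ∈ L) (h1 : 1 ∉ L) :
    IsSphericalCode_s15 L (univ.image v) ∧ #(univ.image v) = Fintype.card ι := by
  have hinj : Function.Injective v := fun x y hxy => by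
    by_contra hne
    have := hL x y hne
    rw [hxy, hv] at this
    exact h1 this
  refine ⟨⟨?_, ?_⟩, card_image_of_injective _ hinj⟩ <;>
    simp only [mem_image, mem_univ, true_and, forall_exists_index, forall_apply_eq_imp_iff]
  · exact fun x => by rw [norm_eq_sqrt_real_inner, hv, Real.sqrt_one]
  · exact fun x y hxy => hL x y fun h => hxy (congrArg v h)

theorem exists_linearIsometry_euclideanSpace_of_finrank_le [FiniteDimensional ℝ E] {n : ℕ}
    (h : finrank ℝ E ≤ n) : Nonempty (E →ₗᵢ[ℝ] EuclideanSpace ℝ (Fin n)) := by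
  let b := (stdOrthonormalBasis ℝ E).toBasis
  let u := EuclideanSpace.basisFun (Fin n) ℝ ∘ Fin.castLE h
  have hb : Orthonormal ℝ b := by
    rw [OrthonormalBasis.coe_toBasis]; exact (stdOrthonormalBasis ℝ E).orthonormal
  have hu : ⇑(b.constr ℝ u) ∘ b = u := funext (b.constr_basis ℝ u)
  refine ⟨(b.constr ℝ u).isometryOfOrthonormal hb ?_⟩
  rw [hu]
  exact (EuclideanSpace.basisFun (Fin n) ℝ).orthonormal.comp _ (Fin.castLE_injective h)

theorem exists_euclideanSpace_inner_eq_of_finrank_span_le {ι : Type*} [Finite ι] {v : ι → E}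
    {n : ℕ} (h : finrank ℝ (span ℝ (Set.range v)) ≤ n) :
    ∃ w : ι → EuclideanSpace ℝ (Fin n), ∀ x y, ⟪w x, w y⟫ = ⟪v x, v y⟫ := by
  have := FiniteDimensional.span_of_finite ℝ (Set.finite_range v)
  obtain ⟨J⟩ := exists_linearIsometry_euclideanSpace_of_finrank_le h
  exact ⟨fun x => J ⟨v x, subset_span ⟨x, rfl⟩⟩, fun x y => J.inner_map_map _ _⟩

end

theorem sum_centered_indicator_mul {ι : Type*} [Fintype ι] [DecidableEq ι] (j j' : ι) :
    ∑ k, ((if k = j then 1 else 0) - (Fintype.card ι : ℝ)⁻¹) *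
      ((if k = j' then 1 else 0) - (Fintype.card ι : ℝ)⁻¹) =
      (if j = j' then 1 else 0) - (Fintype.card ι : ℝ)⁻¹ := by
  have : Nonempty ι := ⟨j⟩
  have hcard : (Fintype.card ι : ℝ) ≠ 0 := Nat.cast_ne_zero.mpr Fintype.card_ne_zero
  simp only [sub_mul, mul_sub, sum_sub_distrib, ite_mul, one_mul, zero_mul, mul_ite,
    mul_one, mul_zero, sum_ite_eq', mem_univ, if_true, sum_const,
    card_univ, nsmul_eq_mul, eq_comm (a := j')]
  field_simp
  ring

section
variable {κ : Type*} [DecidableEq κ] {r : ℕ}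

/-- Copy `i` of the centred simplex, scaled by `γ`, lives on the coordinates `some (i, _)`;
`α` is the component along the common direction `none`. -/
noncomputable def blockSimplex (γ α : ℝ) (x : κ × Fin r) : EuclideanSpace ℝ (Option (κ × Fin r)) :=
  WithLp.toLp 2 fun o => o.elim α fun z =>
    if z.1 = x.1 then γ * ((if z.2 = x.2 then 1 else 0) - (r : ℝ)⁻¹) else 0

theorem inner_blockSimplex [Fintype κ] (γ α : ℝ) (x y : κ × Fin r) :
    ⟪blockSimplex γ α x, blockSimplex γ α y⟫ =
      (if x.1 = y.1 then γ ^ 2 * ((if x.2 = y.2 then 1 else 0) - (r : ℝ)⁻¹) else 0) + α ^ 2 := by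
  have hsimplex : ∑ k : Fin r, γ * ((if k = y.2 then 1 else 0) - (r : ℝ)⁻¹) *
      (γ * ((if k = x.2 then 1 else 0) - (r : ℝ)⁻¹)) =
      γ ^ 2 * ((if x.2 = y.2 then 1 else 0) - (r : ℝ)⁻¹) := by
    have h := sum_centered_indicator_mul x.2 y.2
    rw [Fintype.card_fin] at h
    rw [← h, mul_sum]
    exact sum_congr rfl fun k _ => by ring
  simp [blockSimplex, PiLp.inner_apply, Fintype.sum_option, Fintype.sum_prod_type, hsimplex]
  ring

theorem sum_blockSimplex (γ α : ℝ) (hr : r ≠ 0) (i : κ) :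
    ∑ j : Fin r, blockSimplex γ α (i, j) = (r * α) • EuclideanSpace.single none 1 := by
  ext (_ | z)
  · simp [blockSimplex]
  · have hr' : (r : ℝ) ≠ 0 := Nat.cast_ne_zero.mpr hr
    simp [blockSimplex, WithLp.ofLp_sum, Finset.sum_apply, ← mul_sum,
      sum_sub_distrib, hr']

theorem finrank_span_range_blockSimplex_le [Fintype κ] (γ α : ℝ) (hr : r ≠ 0) :
    finrank ℝ (span ℝ (Set.range (blockSimplex (κ := κ) (r := r) γ α))) ≤
      Fintype.card κ * (r - 1) + 1 := by
  obtain ⟨m, rfl⟩ := Nat.exists_eq_succ_of_ne_zero hr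
  -- the vertices of a copy sum to a multiple of the common direction, so the last one is redundant
  let f : Option (κ × Fin m) → EuclideanSpace ℝ (Option (κ × Fin (m + 1))) :=
    fun o => o.elim (EuclideanSpace.single none 1) fun z => blockSimplex γ α (z.1, z.2.castSucc)
  have hle : span ℝ (Set.range (blockSimplex γ α)) ≤ span ℝ (Set.range f) := by
    rw [span_le]
    rintro _ ⟨⟨i, j⟩, rfl⟩
    induction j using Fin.lastCases with
    | cast k => exact subset_span ⟨some (i, k), rfl⟩
    | last =>
      have hsum := sum_blockSimplex γ α hr i
      rw [Fin.sum_univ_castSucc, ← eq_sub_iff_add_eq'] at hsum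
      rw [SetLike.mem_coe, hsum]
      exact sub_mem (smul_mem _ _ (subset_span ⟨none, rfl⟩))
        (sum_mem fun k _ => subset_span ⟨some (i, k), rfl⟩)
  calc finrank ℝ (span ℝ (Set.range (blockSimplex γ α))) ≤ finrank ℝ (span ℝ (Set.range f)) :=
        finrank_mono hle
    _ ≤ Fintype.card (Option (κ × Fin m)) := finrank_range_le_card f
    _ = Fintype.card κ * (m + 1 - 1) + 1 := by simp

theorem inner_blockSimplex_sqrt [Fintype κ] {τ : ℝ} (hτ : 0 < τ) (x y : κ × Fin r) :
    ⟪blockSimplex √(r / (r - 1 + τ)) √(τ / (r - 1 + τ)) x,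
        blockSimplex √(r / (r - 1 + τ)) √(τ / (r - 1 + τ)) y⟫ =
      if x = y then 1 else if x.1 = y.1 then -(1 - τ) / (r - 1 + τ) else τ / (r - 1 + τ) := by
  have hr : (1 : ℝ) ≤ r := by exact_mod_cast x.2.pos
  have hden : (0 : ℝ) < r - 1 + τ := by linarith
  rw [inner_blockSimplex, Real.sq_sqrt (by positivity), Real.sq_sqrt (by positivity)]
  by_cases h1 : x.1 = y.1 <;> by_cases h2 : x.2 = y.2 <;>
    simp only [Prod.ext_iff, h1, h2, if_true, if_false, and_true, and_false] <;> field_simp <;> ring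

end

def blockSimplexAngles (r : ℕ) (τ : ℝ) : Set ℝ :=
  {-(1 - τ) / ((r : ℝ) - 1 + τ), τ / ((r : ℝ) - 1 + τ)}

theorem one_notMem_blockSimplexAngles {r : ℕ} (hr : 2 ≤ r) {τ : ℝ} (hτ : 0 < τ) :
    1 ∉ blockSimplexAngles r τ := by
  have hr' : (2 : ℝ) ≤ r := by exact_mod_cast hr
  have hden : (0 : ℝ) < r - 1 + τ := by linarith
  simp only [blockSimplexAngles, Set.mem_insert_iff, Set.mem_singleton_iff]
  rintro (h | h) <;> rw [eq_div_iff hden.ne'] at h <;> linarith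

theorem exists_sphericalCode_card_eq {r t d : ℕ} (hr : 2 ≤ r) {τ : ℝ} (hτ : 0 < τ)
    (hd : (r - 1) * t + 1 ≤ d) :
    ∃ P : Finset (EuclideanSpace ℝ (Fin d)),
      IsSphericalCode_s15 (blockSimplexAngles r τ) P ∧ #P = r * t := by
  classical
  have hgram := inner_blockSimplex_sqrt (κ := Fin t) (r := r) hτ
  obtain ⟨w, hw⟩ := exists_euclideanSpace_inner_eq_of_finrank_span_le (n := d)
    ((finrank_span_range_blockSimplex_le (κ := Fin t) (r := r) √(r / (r - 1 + τ))
      √(τ / (r - 1 + τ)) (by omega)).trans (by simpa [mul_comm] using hd))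
  obtain ⟨hP, hcard⟩ := isSphericalCode_image (v := w)
    (fun x => by rw [hw, hgram, if_pos rfl])
    (fun x y hxy => by rw [hw, hgram, if_neg hxy]; split_ifs <;> simp [blockSimplexAngles])
    (one_notMem_blockSimplexAngles hr hτ)
  exact ⟨_, hP, by rw [hcard]; simp [mul_comm]⟩

theorem exists_sphericalCode_card_ge {r d : ℕ} (hr : 2 ≤ r) {τ : ℝ} (hτ : 0 < τ) (hd : 1 ≤ d) :
    ∃ P : Finset (EuclideanSpace ℝ (Fin d)),
      IsSphericalCode_s15 (blockSimplexAngles r τ) P ∧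
        (r : ℝ) / ((r : ℝ) - 1) * d - r ≤ #P := by
  have hfit := Nat.div_mul_le_self (d - 1) (r - 1)
  have hcover := Nat.lt_mul_div_succ (d - 1) (by omega : 0 < r - 1)
  generalize (d - 1) / (r - 1) = t at hfit hcover
  obtain ⟨P, hP, hcard⟩ :=
    exists_sphericalCode_card_eq (t := t) (d := d) hr hτ (by rw [mul_comm]; omega)
  refine ⟨P, hP, ?_⟩
  have hr' : (1 : ℝ) < r := by exact_mod_cast hr
  have hcover' : (d : ℝ) ≤ ((r : ℝ) - 1) * (t + 1) := by
    rw [← Nat.cast_pred (by omega)]; exact_mod_cast (by omega : d ≤ (r - 1) * (t + 1))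
  have hr1 : (r : ℝ) - 1 ≠ 0 := by linarith
  calc (r : ℝ) / (r - 1) * d - r ≤ r / (r - 1) * ((r - 1) * (t + 1)) - r := by gcongr
    _ = #P := by rw [hcard]; push_cast; field_simp; ring

theorem spherical_code_lower_bound_general (r t : ℕ) (hr : 2 ≤ r)
    (τ : ℝ) (hτ0 : 0 < τ) :
    (∃ P : Finset (EuclideanSpace ℝ (Fin ((r - 1) * t + 1))),
      P.card = r * t ∧ (∀ v ∈ P, ‖v‖ = 1) ∧
      ∀ v ∈ P, ∀ w ∈ P, v ≠ w →
        ⟪v, w⟫ ∈ ({-(1 - τ) / ((r : ℝ) - 1 + τ), τ / ((r : ℝ) - 1 + τ)} : Set ℝ)) ∧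
    ∃ C : ℝ, ∀ d : ℕ, 1 ≤ d →
      ∃ P : Finset (EuclideanSpace ℝ (Fin d)),
        (∀ v ∈ P, ‖v‖ = 1) ∧
        (∀ v ∈ P, ∀ w ∈ P, v ≠ w →
          ⟪v, w⟫ ∈ ({-(1 - τ) / ((r : ℝ) - 1 + τ), τ / ((r : ℝ) - 1 + τ)} : Set ℝ)) ∧
        ((r : ℝ) / ((r : ℝ) - 1)) * d - C ≤ P.card := by
  obtain ⟨P, ⟨hnorm, hinner⟩, hcard⟩ := exists_sphericalCode_card_eq (t := t) hr hτ0 le_rfl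
  refine ⟨⟨P, hcard, hnorm, hinner⟩, r, fun d hd => ?_⟩
  obtain ⟨Q, ⟨hnorm, hinner⟩, hcard⟩ := exists_sphericalCode_card_ge hr hτ0 hd
  exact ⟨Q, hnorm, hinner, hcard⟩

/-- **Lower bound construction.** For integers `r ≥ 2`, `t ≥ 1` and `0 < τ ≤ 1`, there is
a set of `rt` unit vectors in `ℝ^{(r−1)t+1}` whose pairwise inner products lie in
`{−(1−τ)/(r−1+τ), τ/(r−1+τ)}`. Consequently, for `L = {−(1−τ)/(r−1+τ), τ/(r−1+τ)}`, the
maximum size of an `L`-spherical code in `ℝ^d` is at least `(r/(r−1))·d + O(1)`. -/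
theorem spherical_code_lower_bound (r t : ℕ) (hr : 2 ≤ r) (ht : 1 ≤ t)
    (τ : ℝ) (hτ0 : 0 < τ) (hτ1 : τ ≤ 1) :
    (∃ P : Finset (EuclideanSpace ℝ (Fin ((r - 1) * t + 1))),
      P.card = r * t ∧ (∀ v ∈ P, ‖v‖ = 1) ∧
      ∀ v ∈ P, ∀ w ∈ P, v ≠ w →
        ⟪v, w⟫ ∈ ({-(1 - τ) / ((r : ℝ) - 1 + τ), τ / ((r : ℝ) - 1 + τ)} : Set ℝ)) ∧
    ∃ C : ℝ, ∀ d : ℕ, 1 ≤ d →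
      ∃ P : Finset (EuclideanSpace ℝ (Fin d)),
        (∀ v ∈ P, ‖v‖ = 1) ∧
        (∀ v ∈ P, ∀ w ∈ P, v ≠ w →
          ⟪v, w⟫ ∈ ({-(1 - τ) / ((r : ℝ) - 1 + τ), τ / ((r : ℝ) - 1 + τ)} : Set ℝ)) ∧
        ((r : ℝ) / ((r : ℝ) - 1)) * d - C ≤ P.card :=
  spherical_code_lower_bound_general r t hr τ hτ0
end
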